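/- arXiv:1907.07632 — 3 statements merged into one kernel-verified Lean document; each statement's English description precedes it below -/
import Mathlib

section
/- Let θ ∈ (0,1] and let E ⊂ ℝ^n be bounded and nonempty. (i) For every 0 < r < 1 and all 0 ≤ t ≤ s ≤ n, −(s−t) ≤ (log S_{r,θ}^s(E))/(−log r) − (log S_{r,θ}^t(E))/(−log r) ≤ −θ(s−t). (ii) There is a unique s ∈ [0,n] such that liminf_{r→0} (log S_{r,θ}^s(E))/(−log r) = 0, and a unique s ∈ [0,n] such that limsup_{r→0} (log S_{r,θ}^s(E))/(−log r) = 0. -/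
open MeasureTheory Metric Set Filter Topology
open scoped ENNReal NNReal

noncomputable section

/-- Euclidean space `ℝ^n`. -/
abbrev Euc (n : ℕ) := EuclideanSpace ℝ (Fin n)

instance matrixMeasurableSpace (n : ℕ) : MeasurableSpace (Matrix (Fin n) (Fin n) ℝ) :=
  inferInstanceAs (MeasurableSpace (Fin n → Fin n → ℝ))

/-- The restricted covering sum `S_{r,θ}^s(E)`: the infimum of `Σ_i |U_i|^s` over all
countable covers `{U_i}` of `E` with `r ≤ |U_i| ≤ r^θ`, valued in `ℝ≥0∞`. -/
def coverSum (n : ℕ) (E : Set (Euc n)) (θ s r : ℝ) : ℝ≥0∞ :=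
  sInf { T : ℝ≥0∞ | ∃ 𝒰 : Set (Set (Euc n)), 𝒰.Countable ∧ E ⊆ ⋃₀ 𝒰 ∧
    (∀ U ∈ 𝒰, r ≤ diam U ∧ diam U ≤ r ^ θ) ∧
    T = ∑' U : 𝒰, ENNReal.ofReal (diam (U : Set (Euc n)) ^ s) }

/-- Real-valued version of `coverSum`. -/
def Sval (n : ℕ) (E : Set (Euc n)) (θ s r : ℝ) : ℝ := (coverSum n E θ s r).toReal

/-- The quotient `log S_{r,θ}^s(E) / (-log r)`. -/
def Squot (n : ℕ) (E : Set (Euc n)) (θ s r : ℝ) : ℝ :=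
  Real.log (Sval n E θ s r) / (-Real.log r)

/-- `N_δ(E)`: the smallest number of sets of diameter at most `δ` needed to cover `E`. -/
def covNum (n : ℕ) (E : Set (Euc n)) (δ : ℝ) : ℕ :=
  sInf { k : ℕ | ∃ U : Fin k → Set (Euc n), E ⊆ ⋃ i, U i ∧ ∀ i, diam (U i) ≤ δ }

/-- The lower box-counting dimension of `E`. -/
def lowerBoxDim (n : ℕ) (E : Set (Euc n)) : ℝ :=
  liminf (fun δ : ℝ => Real.log (covNum n E δ) / (-Real.log δ)) (𝓝[>] 0)

/-- The upper box-counting dimension of `E`. -/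
def upperBoxDim (n : ℕ) (E : Set (Euc n)) : ℝ :=
  limsup (fun δ : ℝ => Real.log (covNum n E δ) / (-Real.log δ)) (𝓝[>] 0)

/-- The kernel `φ_{r,θ}^{s,m}`. -/
def phiK (n : ℕ) (m s θ r : ℝ) (x : Euc n) : ℝ :=
  if ‖x‖ < r then 1
  else if ‖x‖ < r ^ θ then (r / ‖x‖) ^ s
  else r ^ (θ * (m - s) + s) / ‖x‖ ^ m

/-- The kernel `φ̃_{r,θ}^s`. -/
def phiT (n : ℕ) (s θ r : ℝ) (x : Euc n) : ℝ :=
  if ‖x‖ < r then 1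
  else if ‖x‖ ≤ r ^ θ then (r / ‖x‖) ^ s
  else 0

/-- The kernel `φ_r^m(x) = min{1, (r/|x|)^m}`. -/
def phiB (n : ℕ) (m r : ℝ) (x : Euc n) : ℝ :=
  if ‖x‖ ≤ r then 1 else (r / ‖x‖) ^ m

/-- The energy `∬ φ(x-y) dμ(x)dμ(y)` of a measure with respect to a kernel `φ`. -/
def energy (n : ℕ) (φ : Euc n → ℝ) (μ : Measure (Euc n)) : ℝ :=
  ∫ x, ∫ y, φ (x - y) ∂μ ∂μ

/-- The potential `∫ φ(x-y) dμ(y)` of a measure at `x` with respect to a kernel `φ`. -/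
def potential (n : ℕ) (φ : Euc n → ℝ) (μ : Measure (Euc n)) (x : Euc n) : ℝ :=
  ∫ y, φ (x - y) ∂μ

/-- `μ` is a Borel probability measure supported on `E`. -/
def PMeasOn (n : ℕ) (E : Set (Euc n)) (μ : Measure (Euc n)) : Prop :=
  IsProbabilityMeasure μ ∧ μ Eᶜ = 0

/-- The capacity `C_{r,θ}^{s,m}(E)`: the reciprocal of the infimal energy of Borel
probability measures supported on `E` with respect to the kernel `φ_{r,θ}^{s,m}`. -/
def capacity (n : ℕ) (m s θ r : ℝ) (E : Set (Euc n)) : ℝ :=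
  (sInf { e : ℝ | ∃ μ : Measure (Euc n), PMeasOn n E μ ∧ e = energy n (phiK n m s θ r) μ })⁻¹

/-- The quotient `log C_{r,θ}^{s,m}(E) / (-log r)`. -/
def Cquot (n : ℕ) (m s θ : ℝ) (E : Set (Euc n)) (r : ℝ) : ℝ :=
  Real.log (capacity n m s θ r E) / (-Real.log r)

/-- `d` is the lower intermediate dimension `\underline{dim}_θ E`, i.e. the unique
`s ∈ [0,n]` such that `liminf_{r→0} log S_{r,θ}^s(E) / (-log r) = 0`. -/
def IsLowerInterDim (n : ℕ) (θ : ℝ) (E : Set (Euc n)) (d : ℝ) : Prop :=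
  d ∈ Icc (0:ℝ) n ∧ liminf (fun r => Squot n E θ d r) (𝓝[>] 0) = 0

/-- `d` is the upper intermediate dimension `\overline{dim}_θ E`. -/
def IsUpperInterDim (n : ℕ) (θ : ℝ) (E : Set (Euc n)) (d : ℝ) : Prop :=
  d ∈ Icc (0:ℝ) n ∧ limsup (fun r => Squot n E θ d r) (𝓝[>] 0) = 0

/-- `d` is the lower intermediate dimension profile `\underline{dim}_θ^m E`, i.e. the unique
`s ∈ [0,m]` such that `liminf_{r→0} log C_{r,θ}^{s,m}(E) / (-log r) = s`; for bounded sets the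
capacity is that of the closure. -/
def IsLowerDimProfile (n m : ℕ) (θ : ℝ) (E : Set (Euc n)) (d : ℝ) : Prop :=
  d ∈ Icc (0:ℝ) m ∧ liminf (fun r => Cquot n m d θ (closure E) r) (𝓝[>] 0) = d

/-- `d` is the upper intermediate dimension profile `\overline{dim}_θ^m E`. -/
def IsUpperDimProfile (n m : ℕ) (θ : ℝ) (E : Set (Euc n)) (d : ℝ) : Prop :=
  d ∈ Icc (0:ℝ) m ∧ limsup (fun r => Cquot n m d θ (closure E) r) (𝓝[>] 0) = d

/-- `P` is the matrix of an orthogonal projection of `ℝ^n` onto an `m`-dimensional subspace;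
such matrices parametrise the Grassmannian `G(n,m)`. -/
def IsProjMat (n m : ℕ) (P : Matrix (Fin n) (Fin n) ℝ) : Prop :=
  P.transpose = P ∧ P * P = P ∧ P.rank = m

/-- The orthogonal projection map `π_V` associated to a projection matrix. -/
def projMap (n : ℕ) (P : Matrix (Fin n) (Fin n) ℝ) : Euc n → Euc n :=
  fun x => Matrix.toEuclideanLin P x

/-- `γ` is the natural invariant measure `γ_{n,m}` on the Grassmannian `G(n,m)` (realised as
the space of orthogonal projection matrices of rank `m`): a probability measure supported on
the rank-`m` orthogonal projections and invariant under the action of the orthogonal group. -/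
def IsGrassMeasure (n m : ℕ) (γ : Measure (Matrix (Fin n) (Fin n) ℝ)) : Prop :=
  IsProbabilityMeasure γ ∧ γ {P | IsProjMat n m P}ᶜ = 0 ∧
  ∀ A ∈ Matrix.orthogonalGroup (Fin n) ℝ,
    Measure.map (fun P => A * P * A.transpose) γ = γ
namespace Statement0Aux

open ENNReal

/-- The defining set of `coverSum`. -/
def CSet (n : ℕ) (E : Set (Euc n)) (θ s r : ℝ) : Set ℝ≥0∞ :=
  { T : ℝ≥0∞ | ∃ 𝒰 : Set (Set (Euc n)), 𝒰.Countable ∧ E ⊆ ⋃₀ 𝒰 ∧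
    (∀ U ∈ 𝒰, r ≤ Metric.diam U ∧ Metric.diam U ≤ r ^ θ) ∧
    T = ∑' U : 𝒰, ENNReal.ofReal (Metric.diam (U : Set (Euc n)) ^ s) }

lemma coverSum_eq (n : ℕ) (E : Set (Euc n)) (θ s r : ℝ) :
    coverSum n E θ s r = sInf (CSet n E θ s r) := rfl

variable {n : ℕ} {E : Set (Euc n)} {θ s t r : ℝ}

lemma tsum_le_mul_tsum (hr : 0 < r) (hts : t ≤ s)
    (𝒰 : Set (Set (Euc n))) (hd : ∀ U ∈ 𝒰, r ≤ Metric.diam U ∧ Metric.diam U ≤ r ^ θ) :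
    ∑' U : 𝒰, ENNReal.ofReal (Metric.diam (U : Set (Euc n)) ^ s)
      ≤ ENNReal.ofReal (r ^ (θ * (s - t))) *
        ∑' U : 𝒰, ENNReal.ofReal (Metric.diam (U : Set (Euc n)) ^ t) := by
  rw [← ENNReal.tsum_mul_left]
  refine ENNReal.tsum_le_tsum fun U => ?_
  rw [← ENNReal.ofReal_mul (by positivity)]
  apply ENNReal.ofReal_le_ofReal
  obtain ⟨h1, h2⟩ := hd U U.2
  have hdpos : (0:ℝ) < Metric.diam (U : Set (Euc n)) := lt_of_lt_of_le hr h1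
  have hsplit : Metric.diam (U : Set (Euc n)) ^ s
      = Metric.diam (U : Set (Euc n)) ^ (s - t) * Metric.diam (U : Set (Euc n)) ^ t := by
    rw [← Real.rpow_add hdpos]; ring_nf
  rw [hsplit]
  have h3 : Metric.diam (U : Set (Euc n)) ^ (s - t) ≤ r ^ (θ * (s - t)) := by
    rw [Real.rpow_mul hr.le]
    exact Real.rpow_le_rpow Metric.diam_nonneg h2 (sub_nonneg.2 hts)
  exact mul_le_mul_of_nonneg_right h3 (Real.rpow_nonneg Metric.diam_nonneg t)

lemma mul_tsum_le_tsum (hr : 0 < r) (hts : t ≤ s)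
    (𝒰 : Set (Set (Euc n))) (hd : ∀ U ∈ 𝒰, r ≤ Metric.diam U ∧ Metric.diam U ≤ r ^ θ) :
    ENNReal.ofReal (r ^ (s - t)) *
        ∑' U : 𝒰, ENNReal.ofReal (Metric.diam (U : Set (Euc n)) ^ t)
      ≤ ∑' U : 𝒰, ENNReal.ofReal (Metric.diam (U : Set (Euc n)) ^ s) := by
  rw [← ENNReal.tsum_mul_left]
  refine ENNReal.tsum_le_tsum fun U => ?_
  rw [← ENNReal.ofReal_mul (by positivity)]
  apply ENNReal.ofReal_le_ofReal
  obtain ⟨h1, h2⟩ := hd U U.2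
  have hdpos : (0:ℝ) < Metric.diam (U : Set (Euc n)) := lt_of_lt_of_le hr h1
  have hsplit : Metric.diam (U : Set (Euc n)) ^ s
      = Metric.diam (U : Set (Euc n)) ^ (s - t) * Metric.diam (U : Set (Euc n)) ^ t := by
    rw [← Real.rpow_add hdpos]; ring_nf
  rw [hsplit]
  have h3 : r ^ (s - t) ≤ Metric.diam (U : Set (Euc n)) ^ (s - t) :=
    Real.rpow_le_rpow hr.le h1 (sub_nonneg.2 hts)
  exact mul_le_mul_of_nonneg_right h3 (Real.rpow_nonneg Metric.diam_nonneg t)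

lemma coverSum_le_mul (hr : 0 < r) (hts : t ≤ s) :
    coverSum n E θ s r ≤ ENNReal.ofReal (r ^ (θ * (s - t))) * coverSum n E θ t r := by
  set c : ℝ≥0∞ := ENNReal.ofReal (r ^ (θ * (s - t))) with hc
  have hc0 : c ≠ 0 := by
    simp [hc, ENNReal.ofReal_eq_zero, not_le, Real.rpow_pos_of_pos hr]
  have hct : c ≠ ⊤ := ENNReal.ofReal_ne_top
  have key : coverSum n E θ s r / c ≤ coverSum n E θ t r := by
    rw [coverSum_eq n E θ t r]
    refine le_sInf fun T hT => ?_
    obtain ⟨𝒰, hcnt, hcov, hd, rfl⟩ := hT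
    rw [ENNReal.div_le_iff_le_mul (Or.inl hc0) (Or.inl hct), mul_comm]
    refine le_trans (sInf_le ?_) (tsum_le_mul_tsum hr hts 𝒰 hd)
    exact ⟨𝒰, hcnt, hcov, hd, rfl⟩
  rw [ENNReal.div_le_iff_le_mul (Or.inl hc0) (Or.inl hct), mul_comm] at key
  exact key

lemma mul_le_coverSum (hr : 0 < r) (hts : t ≤ s) :
    ENNReal.ofReal (r ^ (s - t)) * coverSum n E θ t r ≤ coverSum n E θ s r := by
  rw [coverSum_eq n E θ s r]
  refine le_sInf fun T hT => ?_
  obtain ⟨𝒰, hcnt, hcov, hd, rfl⟩ := hT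
  refine le_trans ?_ (mul_tsum_le_tsum hr hts 𝒰 hd)
  gcongr
  exact sInf_le ⟨𝒰, hcnt, hcov, hd, rfl⟩

lemma le_coverSum (hEne : E.Nonempty) (hr : 0 < r) (hs : 0 ≤ s) :
    ENNReal.ofReal (r ^ s) ≤ coverSum n E θ s r := by
  rw [coverSum_eq]
  refine le_sInf fun T hT => ?_
  obtain ⟨𝒰, hcnt, hcov, hd, rfl⟩ := hT
  obtain ⟨x, hx⟩ := hEne
  obtain ⟨U, hU, hxU⟩ := hcov hx
  calc ENNReal.ofReal (r ^ s) ≤ ENNReal.ofReal (Metric.diam U ^ s) := by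
        exact ENNReal.ofReal_le_ofReal (Real.rpow_le_rpow hr.le (hd U hU).1 hs)
    _ ≤ _ := ENNReal.le_tsum (⟨U, hU⟩ : 𝒰)

end Statement0Aux
namespace Statement0Aux

open ENNReal

variable {n : ℕ} {E : Set (Euc n)} {θ s t r : ℝ}

lemma abs_coord_le_norm (x : Euc n) (i : Fin n) : |x i| ≤ ‖x‖ := by
  rw [EuclideanSpace.norm_eq]
  have h1 : |x i| = Real.sqrt (‖x i‖ ^ 2) := by
    rw [Real.sqrt_sq_eq_abs, Real.norm_eq_abs, abs_abs]
  rw [h1]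
  apply Real.sqrt_le_sqrt
  exact Finset.single_le_sum (f := fun j => ‖x j‖ ^ 2) (fun j _ => sq_nonneg _)
    (Finset.mem_univ i)

set_option maxHeartbeats 1000000 in
lemma coverSum_le_grid (hn : 0 < n) (hE : Bornology.IsBounded E) :
    ∃ C : ℝ, 1 ≤ C ∧ ∀ r : ℝ, r ∈ Set.Ioo (0:ℝ) 1 → ∀ θ : ℝ, θ ∈ Set.Ioc (0:ℝ) 1 →
      ∀ s : ℝ, 0 ≤ s →
      coverSum n E θ s r ≤ ENNReal.ofReal ((C / r) ^ n * r ^ s) := by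
  obtain ⟨R, hR1, hRE⟩ := hE.subset_closedBall_lt 1 0
  set C : ℝ := 4 * R * (Real.sqrt n + 1) + 1 with hC
  have hsq : (0:ℝ) ≤ Real.sqrt n := Real.sqrt_nonneg _
  have hC1 : 1 ≤ C := by nlinarith
  refine ⟨C, hC1, fun r hr θ hθ s hs => ?_⟩
  obtain ⟨hr0, hr1⟩ := hr
  set ε : ℝ := r / (2 * (Real.sqrt n + 1)) with hε
  have hε0 : 0 < ε := by positivity
  set k : ℕ := ⌊2 * R / ε⌋₊ + 1 with hk
  set ctr : (Fin n → Fin k) → Euc n := fun v => (WithLp.equiv 2 (Fin n → ℝ)).symm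
    (fun i => -R + (v i : ℝ) * ε) with hctr
  set f : (Fin n → Fin k) → Set (Euc n) := fun v => Metric.closedBall (ctr v) (r/2) with hf
  have hctr_apply : ∀ v : Fin n → Fin k, ∀ i, (ctr v) i = -R + (v i : ℝ) * ε := fun v i => rfl
  have i0 : Fin n := ⟨0, hn⟩
  have hrθ : r ≤ r ^ θ := by
    nth_rewrite 1 [← Real.rpow_one r]
    exact Real.rpow_le_rpow_of_exponent_ge hr0 hr1.le hθ.2
  -- diameter bounds
  have hdiam_le : ∀ v, Metric.diam (f v) ≤ r := by
    intro v
    have := Metric.diam_closedBall (x := ctr v) (r := r/2) (by linarith)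
    simpa [hf] using this.trans (by linarith)
  have hdiam_ge : ∀ v, r ≤ Metric.diam (f v) := by
    intro v
    set e : Euc n := EuclideanSpace.single i0 (1:ℝ) with he
    have hne : ‖e‖ = 1 := by simp [he, EuclideanSpace.norm_single]
    have hp : ctr v + (r/2) • e ∈ f v := by
      simp only [hf, Metric.mem_closedBall, dist_self_add_left, norm_smul, hne,
        Real.norm_eq_abs, abs_of_pos (by linarith : (0:ℝ) < r/2), mul_one]
      exact le_rfl
    have hq : ctr v - (r/2) • e ∈ f v := by
      simp only [hf, Metric.mem_closedBall, dist_self_sub_left, norm_smul, hne,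
        Real.norm_eq_abs, abs_of_pos (by linarith : (0:ℝ) < r/2), mul_one]
      exact le_rfl
    have hd : dist (ctr v + (r/2) • e) (ctr v - (r/2) • e) = r := by
      rw [dist_eq_norm]
      have heq : ctr v + (r/2) • e - (ctr v - (r/2) • e) = r • e := by module
      rw [heq, norm_smul, hne, Real.norm_eq_abs, abs_of_pos hr0, mul_one]
    calc r = dist (ctr v + (r/2) • e) (ctr v - (r/2) • e) := hd.symm
      _ ≤ Metric.diam (f v) :=
        Metric.dist_le_diam_of_mem (Metric.isBounded_closedBall) hp hq
  -- covering
  have hcov : E ⊆ ⋃₀ Set.range f := by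
    intro x hx
    have hxR : ∀ i, |x i| ≤ R := by
      intro i
      refine (abs_coord_le_norm x i).trans ?_
      have := hRE hx
      rwa [Metric.mem_closedBall, dist_zero_right] at this
    have hv : ∀ i, ⌊(x i + R) / ε⌋₊ < k := by
      intro i
      have h2 : x i + R ≤ 2 * R := by have := (abs_le.1 (hxR i)).2; linarith
      have h1 : (x i + R) / ε ≤ 2 * R / ε := by gcongr
      exact Nat.lt_succ_of_le (Nat.floor_le_floor h1)
    set v : Fin n → Fin k := fun i => ⟨⌊(x i + R) / ε⌋₊, hv i⟩ with hvdef
    refine ⟨f v, ⟨v, rfl⟩, ?_⟩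
    rw [hf, Metric.mem_closedBall, EuclideanSpace.dist_eq]
    have hcoord : ∀ i, dist (x i) ((ctr v) i) ≤ ε := by
      intro i
      rw [hctr_apply, Real.dist_eq]
      have hvi : ((v i : ℕ) : ℝ) = (⌊(x i + R) / ε⌋₊ : ℝ) := rfl
      set y : ℝ := (x i + R) / ε with hy
      have hy0 : 0 ≤ y := div_nonneg (by have := (abs_le.1 (hxR i)).1; linarith) hε0.le
      have hy1 : (⌊y⌋₊ : ℝ) ≤ y := Nat.floor_le hy0
      have hy2 : y < ⌊y⌋₊ + 1 := Nat.lt_floor_add_one y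
      have hxy : x i + R = y * ε := by rw [hy]; field_simp
      rw [hvi, abs_le]
      constructor <;> nlinarith
    have hsum : ∑ i, dist (x i) ((ctr v) i) ^ 2 ≤ (n : ℝ) * ε ^ 2 := by
      calc ∑ i, dist (x i) ((ctr v) i) ^ 2 ≤ ∑ _i : Fin n, ε ^ 2 :=
            Finset.sum_le_sum fun i _ => pow_le_pow_left₀ dist_nonneg (hcoord i) 2
        _ = (n : ℝ) * ε ^ 2 := by simp [Finset.sum_const, nsmul_eq_mul]
    have hkey : (Real.sqrt n + 1) * ε = r / 2 := by
      rw [hε]; field_simp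
    calc Real.sqrt (∑ i, dist (x i) ((ctr v) i) ^ 2)
        ≤ Real.sqrt ((n : ℝ) * ε ^ 2) := Real.sqrt_le_sqrt hsum
      _ = Real.sqrt n * ε := by
          rw [Real.sqrt_mul (Nat.cast_nonneg n), Real.sqrt_sq hε0.le]
      _ ≤ (Real.sqrt n + 1) * ε := by nlinarith
      _ = r / 2 := hkey
  -- summing up
  have hmem : (∑' U : (Set.range f), ENNReal.ofReal (Metric.diam (U : Set (Euc n)) ^ s))
      ∈ CSet n E θ s r := by
    refine ⟨Set.range f, Set.countable_range f, hcov, ?_, rfl⟩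
    rintro U ⟨v, rfl⟩
    exact ⟨hdiam_ge v, (hdiam_le v).trans hrθ⟩
  have hkC : (k : ℝ) ≤ C / r := by
    rw [le_div_iff₀ hr0]
    have h2Rε : 2 * R / ε = 4 * R * (Real.sqrt n + 1) / r := by
      rw [hε]; field_simp; ring
    have hfl : (⌊2 * R / ε⌋₊ : ℝ) ≤ 2 * R / ε :=
      Nat.floor_le (by positivity)
    have hkr : (k : ℝ) = (⌊2 * R / ε⌋₊ : ℝ) + 1 := by rw [hk]; push_cast; ring
    rw [hkr, h2Rε] at *
    have h3 : (4 * R * (Real.sqrt n + 1) / r) * r = 4 * R * (Real.sqrt n + 1) := by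
      field_simp
    nlinarith [hfl]
  classical
  letI : Fintype ↥(Set.range f) := Set.fintypeRange f
  have step1 : coverSum n E θ s r
      ≤ ∑' U : (Set.range f), ENNReal.ofReal (Metric.diam (U : Set (Euc n)) ^ s) := by
    rw [coverSum_eq]; exact sInf_le hmem
  have step2 : (∑' U : (Set.range f), ENNReal.ofReal (Metric.diam (U : Set (Euc n)) ^ s))
      ≤ (Fintype.card ↥(Set.range f)) • ENNReal.ofReal (r ^ s) := by
    rw [tsum_fintype, ← Finset.card_univ]
    refine Finset.sum_le_card_nsmul _ _ _ fun U _ => ?_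
    obtain ⟨v, hv⟩ := U.2
    have : Metric.diam (U : Set (Euc n)) ≤ r := by rw [← hv]; exact hdiam_le v
    exact ENNReal.ofReal_le_ofReal (Real.rpow_le_rpow Metric.diam_nonneg this hs)
  have hcard : Fintype.card ↥(Set.range f) ≤ k ^ n := by
    have h1 := Fintype.card_range_le f
    have h2 : Fintype.card (Fin n → Fin k) = k ^ n := by
      simp [Fintype.card_fun]
    omega
  have step3 : (Fintype.card ↥(Set.range f)) • ENNReal.ofReal (r ^ s)
      ≤ ENNReal.ofReal ((C / r) ^ n * r ^ s) := by
    rw [nsmul_eq_mul, ENNReal.ofReal_mul (by positivity)]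
    refine mul_le_mul' ?_ le_rfl
    calc ((Fintype.card ↥(Set.range f) : ℕ) : ℝ≥0∞) ≤ ((k ^ n : ℕ) : ℝ≥0∞) :=
          Nat.cast_le.2 hcard
      _ = ENNReal.ofReal ((k : ℝ) ^ n) := by
          rw [← ENNReal.ofReal_natCast]; push_cast; ring_nf
      _ ≤ ENNReal.ofReal ((C / r) ^ n) :=
          ENNReal.ofReal_le_ofReal (pow_le_pow_left₀ (Nat.cast_nonneg k) hkC n)
  exact step1.trans (step2.trans step3)

end Statement0Aux
namespace Statement0Aux

open ENNReal

variable {n : ℕ} {E : Set (Euc n)} {θ s t r : ℝ}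

lemma Sval_facts (hn : 0 < n) (hθ : θ ∈ Set.Ioc (0:ℝ) 1) (hE : Bornology.IsBounded E)
    (hEne : E.Nonempty) :
    ∃ C : ℝ, 1 ≤ C ∧ ∀ r : ℝ, r ∈ Set.Ioo (0:ℝ) 1 →
      (∀ s : ℝ, 0 ≤ s → r ^ s ≤ Sval n E θ s r ∧ Sval n E θ s r ≤ (C / r) ^ n * r ^ s) ∧
      (∀ s t : ℝ, 0 ≤ t → t ≤ s →
        r ^ (s - t) * Sval n E θ t r ≤ Sval n E θ s r ∧
        Sval n E θ s r ≤ r ^ (θ * (s - t)) * Sval n E θ t r) := by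
  obtain ⟨C, hC1, hCb⟩ := coverSum_le_grid hn hE
  refine ⟨C, hC1, fun r hr => ?_⟩
  obtain ⟨hr0, hr1⟩ := hr
  have hne_top : ∀ s : ℝ, 0 ≤ s → coverSum n E θ s r ≠ ⊤ := fun s hs =>
    ne_top_of_le_ne_top ENNReal.ofReal_ne_top (hCb r ⟨hr0, hr1⟩ θ hθ s hs)
  have hup : ∀ s : ℝ, 0 ≤ s → Sval n E θ s r ≤ (C / r) ^ n * r ^ s := fun s hs =>
    ENNReal.toReal_le_of_le_ofReal (by positivity) (hCb r ⟨hr0, hr1⟩ θ hθ s hs)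
  have hlow : ∀ s : ℝ, 0 ≤ s → r ^ s ≤ Sval n E θ s r := fun s hs =>
    (ENNReal.ofReal_le_iff_le_toReal (hne_top s hs)).1 (le_coverSum hEne hr0 hs)
  refine ⟨fun s hs => ⟨hlow s hs, hup s hs⟩, fun s t ht hts => ?_⟩
  have hs : 0 ≤ s := ht.trans hts
  constructor
  · have h1 := mul_le_coverSum (θ := θ) (E := E) hr0 hts
    have h2 := ENNReal.toReal_mono (hne_top s hs) h1
    rwa [ENNReal.toReal_mul, ENNReal.toReal_ofReal (by positivity)] at h2
  · have h1 := coverSum_le_mul (θ := θ) (E := E) hr0 hts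
    have h2 := ENNReal.toReal_mono
      (by
        refine ENNReal.mul_ne_top ENNReal.ofReal_ne_top (hne_top t ht)) h1
    rwa [ENNReal.toReal_mul, ENNReal.toReal_ofReal (by positivity)] at h2

lemma part_one (hn : 0 < n) (hθ : θ ∈ Set.Ioc (0:ℝ) 1) (hE : Bornology.IsBounded E)
    (hEne : E.Nonempty) :
    ∀ r : ℝ, r ∈ Set.Ioo (0:ℝ) 1 → ∀ s t : ℝ, 0 ≤ t → t ≤ s →
      -(s - t) ≤ Squot n E θ s r - Squot n E θ t r ∧
        Squot n E θ s r - Squot n E θ t r ≤ -(θ * (s - t)) := by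
  obtain ⟨C, hC1, hCb⟩ := Sval_facts hn hθ hE hEne
  intro r hr s t ht hts
  obtain ⟨hr0, hr1⟩ := hr
  have hs : 0 ≤ s := ht.trans hts
  obtain ⟨hbnd, hcmp⟩ := hCb r ⟨hr0, hr1⟩
  have hSt : 0 < Sval n E θ t r := lt_of_lt_of_le (Real.rpow_pos_of_pos hr0 t) (hbnd t ht).1
  have hSs : 0 < Sval n E θ s r := lt_of_lt_of_le (Real.rpow_pos_of_pos hr0 s) (hbnd s hs).1
  obtain ⟨h1, h2⟩ := hcmp s t ht hts
  have hl0 : 0 < -Real.log r := by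
    have := Real.log_neg hr0 hr1; linarith
  have hlog1 : (s - t) * Real.log r + Real.log (Sval n E θ t r) ≤ Real.log (Sval n E θ s r) := by
    have := Real.log_le_log (by positivity) h1
    rwa [Real.log_mul (by positivity) hSt.ne', Real.log_rpow hr0] at this
  have hlog2 : Real.log (Sval n E θ s r) ≤ θ * (s - t) * Real.log r + Real.log (Sval n E θ t r) := by
    have := Real.log_le_log hSs h2
    rwa [Real.log_mul (by positivity) hSt.ne', Real.log_rpow hr0] at this
  unfold Squot
  rw [div_sub_div_same]
  constructor
  · rw [le_div_iff₀ hl0]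
    nlinarith
  · rw [div_le_iff₀ hl0]
    nlinarith

lemma squot_core (hn : 0 < n) (hθ : θ ∈ Set.Ioc (0:ℝ) 1) (hE : Bornology.IsBounded E)
    (hEne : E.Nonempty) :
    ∃ C : ℝ, 0 ≤ Real.log C ∧ ∀ r : ℝ, r ∈ Set.Ioo (0:ℝ) 1 → ∀ s : ℝ, 0 ≤ s →
      -s ≤ Squot n E θ s r ∧
      Squot n E θ s r ≤ (n : ℝ) * Real.log C / (-Real.log r) + ((n : ℝ) - s) := by
  obtain ⟨C, hC1, hCb⟩ := Sval_facts hn hθ hE hEne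
  refine ⟨C, Real.log_nonneg hC1, fun r hr s hs => ?_⟩
  obtain ⟨hr0, hr1⟩ := hr
  obtain ⟨hbnd, _⟩ := hCb r ⟨hr0, hr1⟩
  obtain ⟨h1, h2⟩ := hbnd s hs
  have hC0 : 0 < C := lt_of_lt_of_le one_pos hC1
  have hSs : 0 < Sval n E θ s r := lt_of_lt_of_le (Real.rpow_pos_of_pos hr0 s) h1
  have hl0 : 0 < -Real.log r := by
    have := Real.log_neg hr0 hr1; linarith
  have hlog1 : s * Real.log r ≤ Real.log (Sval n E θ s r) := by
    have := Real.log_le_log (Real.rpow_pos_of_pos hr0 s) h1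
    rwa [Real.log_rpow hr0] at this
  have hlog2 : Real.log (Sval n E θ s r)
      ≤ (n : ℝ) * (Real.log C - Real.log r) + s * Real.log r := by
    have := Real.log_le_log hSs h2
    rwa [Real.log_mul (by positivity) (by positivity), Real.log_pow,
      Real.log_div hC0.ne' hr0.ne', Real.log_rpow hr0] at this
  unfold Squot
  constructor
  · rw [le_div_iff₀ hl0]; nlinarith
  · rw [div_le_iff₀ hl0]
    have expand : ((n : ℝ) * Real.log C / (-Real.log r) + ((n : ℝ) - s)) * (-Real.log r)
        = (n : ℝ) * Real.log C + ((n : ℝ) - s) * (-Real.log r) := by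
      have hlrne : Real.log r ≠ 0 := by linarith
      field_simp
      ring
    rw [expand]
    nlinarith

end Statement0Aux
namespace Statement0Aux

open ENNReal

variable {n : ℕ} {E : Set (Euc n)} {θ s t r : ℝ}

lemma squot_zero_dim (hn : n = 0) (hEne : E.Nonempty) (hr : 0 < r) (θ s : ℝ) :
    Squot n E θ s r = 0 := by
  subst hn
  haveI hsub : Subsingleton (Euc 0) := ⟨fun a b => PiLp.ext fun i => Fin.elim0 i⟩
  have hemp : CSet 0 E θ s r = ∅ := by
    rw [Set.eq_empty_iff_forall_notMem]
    rintro T ⟨𝒰, -, hcov, hd, -⟩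
    obtain ⟨x, hx⟩ := hEne
    obtain ⟨U, hU, -⟩ := hcov hx
    have h1 := (hd U hU).1
    have h2 : Metric.diam U = 0 :=
      Metric.diam_subsingleton (Set.subsingleton_of_subsingleton)
    rw [h2] at h1; linarith
  have hcs : coverSum 0 E θ s r = ⊤ := by
    rw [coverSum_eq, hemp, sInf_empty]
  unfold Squot Sval
  rw [hcs]
  simp

lemma exists_unique_parts (hn : 0 < n) (hθ : θ ∈ Set.Ioc (0:ℝ) 1)
    (hE : Bornology.IsBounded E) (hEne : E.Nonempty) :
    (∃! s : ℝ, s ∈ Set.Icc (0:ℝ) n ∧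
      Filter.liminf (fun r => Squot n E θ s r) (𝓝[>] 0) = 0) ∧
    (∃! s : ℝ, s ∈ Set.Icc (0:ℝ) n ∧
      Filter.limsup (fun r => Squot n E θ s r) (𝓝[>] 0) = 0) := by
  obtain ⟨C, hlogC, hcore⟩ := squot_core hn hθ hE hEne
  set L : Filter ℝ := 𝓝[>] (0:ℝ) with hL
  have hmemL : Set.Ioo (0:ℝ) (1/2) ∈ L := Ioo_mem_nhdsGT (by norm_num)
  set u : ℝ → ℝ → ℝ := fun s r => Squot n E θ s r with hu
  set B : ℝ := (n:ℝ) * Real.log C / Real.log 2 + n with hB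
  have hl2pos : (0:ℝ) < Real.log 2 := Real.log_pos (by norm_num)
  have hnum : 0 ≤ (n:ℝ) * Real.log C := mul_nonneg (Nat.cast_nonneg n) hlogC
  have hbound : ∀ s : ℝ, 0 ≤ s → s ≤ n → ∀ r ∈ Set.Ioo (0:ℝ) (1/2:ℝ),
      -(n:ℝ) ≤ u s r ∧ u s r ≤ B := by
    intro s hs0 hsn r hr
    have hr1 : r ∈ Set.Ioo (0:ℝ) 1 := ⟨hr.1, hr.2.trans (by norm_num)⟩
    obtain ⟨h1, h2⟩ := hcore r hr1 s hs0
    have hl2 : Real.log 2 ≤ -Real.log r := by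
      have hle := Real.log_le_log hr.1 (le_of_lt hr.2)
      have h12 : Real.log (1/2 : ℝ) = -Real.log 2 := by rw [one_div, Real.log_inv]
      linarith
    have hfrac : (n:ℝ) * Real.log C / (-Real.log r) ≤ (n:ℝ) * Real.log C / Real.log 2 :=
      div_le_div_of_nonneg_left hnum hl2pos hl2
    exact ⟨by linarith, by rw [hB]; linarith⟩
  have hev_le : ∀ s : ℝ, 0 ≤ s → s ≤ n → ∀ᶠ r in L, u s r ≤ B := fun s hs0 hsn =>
    Filter.eventually_of_mem hmemL fun r hr => (hbound s hs0 hsn r hr).2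
  have hev_ge : ∀ s : ℝ, 0 ≤ s → s ≤ n → ∀ᶠ r in L, -(n:ℝ) ≤ u s r := fun s hs0 hsn =>
    Filter.eventually_of_mem hmemL fun r hr => (hbound s hs0 hsn r hr).1
  have hbddle : ∀ s : ℝ, 0 ≤ s → s ≤ n → Filter.IsBoundedUnder (· ≤ ·) L (u s) :=
    fun s hs0 hsn => Filter.isBoundedUnder_of_eventually_le (hev_le s hs0 hsn)
  have hbddge : ∀ s : ℝ, 0 ≤ s → s ≤ n → Filter.IsBoundedUnder (· ≥ ·) L (u s) :=
    fun s hs0 hsn => Filter.isBoundedUnder_of_eventually_ge (hev_ge s hs0 hsn)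
  set F : ℝ → ℝ := fun s => Filter.liminf (fun r => Squot n E θ s r) L with hF
  set G : ℝ → ℝ := fun s => Filter.limsup (fun r => Squot n E θ s r) L with hG
  have hFu : ∀ s, F s = Filter.liminf (u s) L := fun s => rfl
  have hGu : ∀ s, G s = Filter.limsup (u s) L := fun s => rfl
  have hpt := part_one hn hθ hE hEne
  have hev_gap1 : ∀ s t2 : ℝ, 0 ≤ t2 → t2 ≤ s →
      ∀ᶠ r in L, u s r ≤ u t2 r + -(θ * (s - t2)) := by
    intro s t2 ht2 hts
    exact Filter.eventually_of_mem hmemL fun r hr => by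
      have h := hpt r ⟨hr.1, hr.2.trans (by norm_num)⟩ s t2 ht2 hts
      simp only [hu]
      linarith [h.1, h.2]
  have hev_gap2 : ∀ s t2 : ℝ, 0 ≤ t2 → t2 ≤ s →
      ∀ᶠ r in L, u t2 r + -(s - t2) ≤ u s r := by
    intro s t2 ht2 hts
    exact Filter.eventually_of_mem hmemL fun r hr => by
      have h := hpt r ⟨hr.1, hr.2.trans (by norm_num)⟩ s t2 ht2 hts
      simp only [hu]
      linarith [h.1, h.2]
  have hgapF : ∀ t2 s : ℝ, 0 ≤ t2 → t2 ≤ s → s ≤ n →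
      F s ≤ F t2 - θ * (s - t2) ∧ F t2 - (s - t2) ≤ F s := by
    intro t2 s ht2 hts hsn
    have hs0 : 0 ≤ s := ht2.trans hts
    have ht2n : t2 ≤ n := hts.trans hsn
    have hcob_t : Filter.IsCoboundedUnder (· ≥ ·) L (u t2) :=
      (hbddle t2 ht2 ht2n).isCoboundedUnder_ge
    have hadd1 : Filter.liminf (fun r => u t2 r + -(θ * (s - t2))) L = F t2 + -(θ * (s - t2)) := by
      rw [hFu]; exact liminf_add_const L (u t2) _ hcob_t (hbddge t2 ht2 ht2n)
    have hadd2 : Filter.liminf (fun r => u t2 r + -(s - t2)) L = F t2 + -(s - t2) := by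
      rw [hFu]; exact liminf_add_const L (u t2) _ hcob_t (hbddge t2 ht2 ht2n)
    constructor
    · have h1 : F s ≤ Filter.liminf (fun r => u t2 r + -(θ * (s - t2))) L := by
        rw [hFu]
        refine Filter.liminf_le_liminf (hev_gap1 s t2 ht2 hts) (hbddge s hs0 hsn) ?_
        refine Filter.IsBoundedUnder.isCoboundedUnder_ge ?_
        exact Filter.isBoundedUnder_of_eventually_le (a := B + -(θ * (s - t2)))
          ((hev_le t2 ht2 ht2n).mono fun r hr => by linarith)
      rw [hadd1] at h1; linarith
    · have h1 : Filter.liminf (fun r => u t2 r + -(s - t2)) L ≤ F s := by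
        rw [hFu]
        refine Filter.liminf_le_liminf (hev_gap2 s t2 ht2 hts) ?_
          ((hbddle s hs0 hsn).isCoboundedUnder_ge)
        exact Filter.isBoundedUnder_of_eventually_ge (a := -(n:ℝ) + -(s - t2))
          ((hev_ge t2 ht2 ht2n).mono fun r hr => by linarith)
      rw [hadd2] at h1; linarith
  have hgapG : ∀ t2 s : ℝ, 0 ≤ t2 → t2 ≤ s → s ≤ n →
      G s ≤ G t2 - θ * (s - t2) ∧ G t2 - (s - t2) ≤ G s := by
    intro t2 s ht2 hts hsn
    have hs0 : 0 ≤ s := ht2.trans hts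
    have ht2n : t2 ≤ n := hts.trans hsn
    have hcob_t : Filter.IsCoboundedUnder (· ≤ ·) L (u t2) :=
      (hbddge t2 ht2 ht2n).isCoboundedUnder_le
    have hadd1 : Filter.limsup (fun r => u t2 r + -(θ * (s - t2))) L = G t2 + -(θ * (s - t2)) := by
      rw [hGu]; exact limsup_add_const L (u t2) _ (hbddle t2 ht2 ht2n) hcob_t
    have hadd2 : Filter.limsup (fun r => u t2 r + -(s - t2)) L = G t2 + -(s - t2) := by
      rw [hGu]; exact limsup_add_const L (u t2) _ (hbddle t2 ht2 ht2n) hcob_t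
    constructor
    · have h1 : G s ≤ Filter.limsup (fun r => u t2 r + -(θ * (s - t2))) L := by
        rw [hGu]
        refine Filter.limsup_le_limsup (hev_gap1 s t2 ht2 hts)
          ((hbddge s hs0 hsn).isCoboundedUnder_le) ?_
        exact Filter.isBoundedUnder_of_eventually_le (a := B + -(θ * (s - t2)))
          ((hev_le t2 ht2 ht2n).mono fun r hr => by linarith)
      rw [hadd1] at h1; linarith
    · have h1 : Filter.limsup (fun r => u t2 r + -(s - t2)) L ≤ G s := by
        rw [hGu]
        refine Filter.limsup_le_limsup (hev_gap2 s t2 ht2 hts) ?_ (hbddle s hs0 hsn)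
        refine Filter.IsBoundedUnder.isCoboundedUnder_le ?_
        exact Filter.isBoundedUnder_of_eventually_ge (a := -(n:ℝ) + -(s - t2))
          ((hev_ge t2 ht2 ht2n).mono fun r hr => by linarith)
      rw [hadd2] at h1; linarith
  -- endpoint values
  have hcastn : (0:ℝ) ≤ (n:ℝ) := Nat.cast_nonneg n
  have hF0 : 0 ≤ F 0 := by
    rw [hFu]
    refine Filter.le_liminf_of_le ((hbddle 0 le_rfl hcastn).isCoboundedUnder_ge) ?_
    exact Filter.eventually_of_mem hmemL fun r hr => by
      have := (hcore r ⟨hr.1, hr.2.trans (by norm_num)⟩ 0 le_rfl).1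
      simpa [hu] using this
  have hG0 : 0 ≤ G 0 := by
    refine hF0.trans ?_
    rw [hFu, hGu]
    exact Filter.liminf_le_limsup (hbddle 0 le_rfl hcastn) (hbddge 0 le_rfl hcastn)
  have hwten : Filter.Tendsto (fun r : ℝ => (n:ℝ) * Real.log C / (-Real.log r)) L (𝓝 0) := by
    apply Filter.Tendsto.const_div_atTop ?_ _
    exact tendsto_neg_atTop_iff.2 Real.tendsto_log_nhdsGT_zero
  have hGn : G (n:ℝ) ≤ 0 := by
    rw [hGu]
    have hevn : ∀ᶠ r in L, u (n:ℝ) r ≤ (n:ℝ) * Real.log C / (-Real.log r) :=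
      Filter.eventually_of_mem hmemL fun r hr => by
        have := (hcore r ⟨hr.1, hr.2.trans (by norm_num)⟩ n hcastn).2
        simp only [hu]; linarith
    have h2 := Filter.limsup_le_limsup hevn
      ((hbddge (n:ℝ) hcastn le_rfl).isCoboundedUnder_le) hwten.isBoundedUnder_le
    rwa [hwten.limsup_eq] at h2
  have hFn : F (n:ℝ) ≤ 0 := by
    refine le_trans ?_ hGn
    rw [hFu, hGu]
    exact Filter.liminf_le_limsup (hbddle _ hcastn le_rfl) (hbddge _ hcastn le_rfl)
  -- generic existence-uniqueness
  have key : ∀ H : ℝ → ℝ,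
      (∀ t2 s : ℝ, 0 ≤ t2 → t2 ≤ s → s ≤ n →
        H s ≤ H t2 - θ * (s - t2) ∧ H t2 - (s - t2) ≤ H s) →
      0 ≤ H 0 → H (n:ℝ) ≤ 0 → ∃! x : ℝ, x ∈ Set.Icc (0:ℝ) n ∧ H x = 0 := by
    intro H hgap h0 hn0
    have hlip : LipschitzOnWith 1 H (Set.Icc 0 (n:ℝ)) := by
      rw [lipschitzOnWith_iff_dist_le_mul]
      intro a ha b hb
      rw [NNReal.coe_one, one_mul, Real.dist_eq, Real.dist_eq]
      rcases le_total a b with hab | hba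
      · have h := hgap a b ha.1 hab hb.2
        have hmn : 0 ≤ θ * (b - a) := mul_nonneg hθ.1.le (by linarith)
        have habs : |a - b| = b - a := by rw [abs_sub_comm]; exact abs_of_nonneg (by linarith)
        rw [habs, abs_le]
        constructor <;> linarith [h.1, h.2]
      · have h := hgap b a hb.1 hba ha.2
        have hmn : 0 ≤ θ * (a - b) := mul_nonneg hθ.1.le (by linarith)
        have habs : |a - b| = a - b := abs_of_nonneg (by linarith)
        rw [habs, abs_le]
        constructor <;> linarith [h.1, h.2]
    have hcont : ContinuousOn H (Set.Icc 0 (n:ℝ)) := hlip.continuousOn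
    have hmem0 : (0:ℝ) ∈ Set.Icc (H (n:ℝ)) (H 0) := ⟨hn0, h0⟩
    obtain ⟨x, hx, hHx⟩ := intermediate_value_Icc' hcastn hcont hmem0
    refine ⟨x, ⟨hx, hHx⟩, ?_⟩
    rintro y ⟨hy, hHy⟩
    by_contra hne
    rcases lt_or_gt_of_ne hne with hlt | hgt
    · have h := (hgap y x hy.1 hlt.le hx.2).1
      rw [hHx, hHy] at h
      nlinarith [hθ.1]
    · have h := (hgap x y hx.1 hgt.le hy.2).1
      rw [hHx, hHy] at h
      nlinarith [hθ.1]
  exact ⟨key F hgapF hF0 hFn, key G hgapG hG0 hGn⟩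

end Statement0Aux
/-- Lipschitz-type bounds for the covering sums in the exponent `s`, and
uniqueness of the zeros of the lower/upper limits of `log S_{r,θ}^s(E)/(-log r)`. -/
theorem statement0 (n : ℕ) (θ : ℝ) (hθ : θ ∈ Ioc (0:ℝ) 1)
    (E : Set (Euc n)) (hE : Bornology.IsBounded E) (hEne : E.Nonempty) :
    (∀ r : ℝ, r ∈ Ioo (0:ℝ) 1 → ∀ s t : ℝ, 0 ≤ t → t ≤ s → s ≤ n →
      -(s - t) ≤ Squot n E θ s r - Squot n E θ t r ∧
        Squot n E θ s r - Squot n E θ t r ≤ -(θ * (s - t))) ∧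
    (∃! s : ℝ, s ∈ Icc (0:ℝ) n ∧ liminf (fun r => Squot n E θ s r) (𝓝[>] 0) = 0) ∧
    (∃! s : ℝ, s ∈ Icc (0:ℝ) n ∧ limsup (fun r => Squot n E θ s r) (𝓝[>] 0) = 0) := by
  rcases Nat.eq_zero_or_pos n with hn | hn
  · -- degenerate case `n = 0`
    have hn0 : (n:ℝ) = 0 := by rw [hn]; norm_num
    constructor
    · intro r hr s t ht hts hsn
      have hs0 : Squot n E θ s r = 0 := Statement0Aux.squot_zero_dim hn hEne hr.1 θ s
      have ht0 : Squot n E θ t r = 0 := Statement0Aux.squot_zero_dim hn hEne hr.1 θ t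
      have hst : s = t := le_antisymm (by linarith [hn0 ▸ hsn]) hts
      rw [hs0, ht0, hst]
      norm_num
    · have heq : ∀ s : ℝ, (fun r => Squot n E θ s r) =ᶠ[𝓝[>] (0:ℝ)] (fun _ => (0:ℝ)) :=
        fun s => Filter.eventually_of_mem self_mem_nhdsWithin fun r hr =>
          Statement0Aux.squot_zero_dim hn hEne hr θ s
      constructor
      · refine ⟨0, ⟨⟨le_rfl, Nat.cast_nonneg n⟩, ?_⟩, ?_⟩
        · rw [Filter.liminf_congr (heq 0)]
          exact Filter.liminf_const 0
        · rintro y ⟨hy, -⟩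
          exact le_antisymm (hn0 ▸ hy.2) hy.1
      · refine ⟨0, ⟨⟨le_rfl, Nat.cast_nonneg n⟩, ?_⟩, ?_⟩
        · rw [Filter.limsup_congr (heq 0)]
          exact Filter.limsup_const 0
        · rintro y ⟨hy, -⟩
          exact le_antisymm (hn0 ▸ hy.2) hy.1
  · refine ⟨?_, (Statement0Aux.exists_unique_parts hn hθ hE hEne).1,
      (Statement0Aux.exists_unique_parts hn hθ hE hEne).2⟩
    intro r hr s t ht hts _
    exact Statement0Aux.part_one hn hθ hE hEne r hr s t ht hts
end
end

section
/- Let θ ∈ (0,1] and let E ⊂ ℝ^n be bounded and nonempty. Then the lower intermediate dimension \underline{dim}_θ E, defined as inf{ s ≥ 0 : for all ε > 0 and all r₀ > 0 there exist 0 < r ≤ r₀ and a cover {U_i} of E with r^{1/θ} ≤ |U_i| ≤ r for all i and Σ_i |U_i|^s ≤ ε }, equals the unique s ∈ [0,n] such that liminf_{r→0} (log S_{r,θ}^s(E))/(−log r) = 0. Likewise the upper intermediate dimension \overline{dim}_θ E, defined as inf{ s ≥ 0 : for all ε > 0 there exists r₀ > 0 such that for all 0 < r ≤ r₀ there is a cover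 {U_i} of E with r^{1/θ} ≤ |U_i| ≤ r for all i and Σ_i |U_i|^s ≤ ε }, equals the unique s ∈ [0,n] such that limsup_{r→0} (log S_{r,θ}^s(E))/(−log r) = 0. -/
open MeasureTheory Metric Set Filter Topology
open scoped ENNReal NNReal

noncomputable section

/-! ### Auxiliary lemmas -/

lemma grid_cover {n : ℕ} (hn : 0 < n) {E : Set (Euc n)} {R : ℝ} (hR : 1 ≤ R)
    (hER : E ⊆ closedBall 0 R) {r : ℝ} (hr : 0 < r) (hr1 : r ≤ 1) :
    ∃ 𝒰 : Set (Set (Euc n)), 𝒰.Countable ∧ E ⊆ ⋃₀ 𝒰 ∧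
      (∀ U ∈ 𝒰, r ≤ diam U ∧ diam U ≤ r) ∧
      (∑' _ : 𝒰, (1:ℝ≥0∞)) ≤ ENNReal.ofReal (((2*R*n+5)/r) ^ n) := by
  have hn' : (1:ℝ) ≤ n := by exact_mod_cast hn
  have hn0 : (0:ℝ) < n := by linarith
  set c : ℝ := r / n with hc
  have hc0 : 0 < c := div_pos hr hn0
  set K : ℤ := ⌈R / c⌉ + 1 with hK
  have hRc : 0 ≤ R / c := by positivity
  have hK1 : (1:ℤ) ≤ K := by
    have := Int.ceil_nonneg hRc
    omega
  set Z : Finset (Fin n → ℤ) := Finset.Icc (fun _ => -K) (fun _ => K) with hZ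
  set y : (Fin n → ℤ) → Euc n := fun z => WithLp.toLp 2 (fun i => c * (z i : ℝ) : Fin n → ℝ) with hy
  set g : (Fin n → ℤ) → Set (Euc n) := fun z => closedBall (y z) (r/2) with hg
  refine ⟨g '' (Z : Set (Fin n → ℤ)), (Z.finite_toSet.image g).countable, ?_, ?_, ?_⟩
  · -- cover
    intro x hx
    have hxR : ‖x‖ ≤ R := by simpa using hER hx
    set z : Fin n → ℤ := fun i => round (x i / c) with hz
    have hcoord : ∀ i, |x i| ≤ R := by
      intro i
      refine le_trans ?_ hxR
      rw [EuclideanSpace.norm_eq, ← Real.sqrt_sq_eq_abs]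
      apply Real.sqrt_le_sqrt
      calc x i ^2 = ‖x i‖ ^ 2 := by rw [Real.norm_eq_abs, sq_abs]
        _ ≤ _ := Finset.single_le_sum (f := fun j => ‖x j‖^2) (fun j _ => by positivity)
            (Finset.mem_univ i)
    have hzZ : z ∈ Z := by
      rw [hZ, Finset.mem_Icc]
      have habs : ∀ i, |z i| ≤ K := by
        intro i
        have h1 : |(z i : ℝ)| ≤ R / c + 1 := by
          have h2 : |(z i : ℝ) - x i / c| ≤ 1/2 := by
            have := abs_sub_round (x i / c)
            rw [abs_sub_comm] at this
            exact this
          have h3 : |x i / c| ≤ R / c := by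
            rw [abs_div, abs_of_pos hc0]
            gcongr
            exact hcoord i
          calc |(z i : ℝ)| ≤ |(z i : ℝ) - x i / c| + |x i / c| := by
                have := abs_add_le ((z i : ℝ) - x i / c) (x i / c); simpa using this
            _ ≤ 1/2 + R/c := by linarith
            _ ≤ R/c + 1 := by linarith
        have h4 : |(z i : ℝ)| ≤ (K : ℝ) := by
          calc |(z i : ℝ)| ≤ R/c + 1 := h1
            _ ≤ (⌈R/c⌉ : ℝ) + 1 := by linarith [Int.le_ceil (R/c)]
            _ = (K : ℝ) := by rw [hK]; push_cast; ring
        exact_mod_cast (abs_le.mpr (abs_le.mp (by exact_mod_cast h4)))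
      constructor <;> intro i <;> { have := abs_le.mp (habs i); simp; omega }
    refine ⟨g z, mem_image_of_mem g hzZ, ?_⟩
    show x ∈ closedBall (y z) (r/2)
    rw [mem_closedBall, EuclideanSpace.dist_eq]
    have hterm : ∀ i, dist (x i) (y z i) ^ 2 ≤ (c/2)^2 := by
      intro i
      rw [Real.dist_eq]
      have heq : x i - y z i = c * (x i / c - round (x i / c)) := by
        rw [hy]; simp only [PiLp.toLp_apply]; field_simp; rfl
      have habs : |x i - y z i| ≤ c/2 := by
        rw [heq, abs_mul, abs_of_pos hc0]
        calc c * |x i / c - round (x i / c)| ≤ c * (1/2) :=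
              mul_le_mul_of_nonneg_left (abs_sub_round _) hc0.le
          _ = c/2 := by ring
      exact pow_le_pow_left₀ (abs_nonneg _) habs 2
    calc √(∑ i, dist (x i) (y z i) ^ 2) ≤ √(∑ _i : Fin n, (c/2)^2) :=
          Real.sqrt_le_sqrt (Finset.sum_le_sum fun i _ => hterm i)
      _ = √((n:ℝ) * (c/2)^2) := by
          rw [Finset.sum_const, Finset.card_univ, Fintype.card_fin, nsmul_eq_mul]
      _ ≤ √((r/2)^2) := by
          apply Real.sqrt_le_sqrt
          have hceq : (n:ℝ) * (c/2)^2 = r^2/(4*n) := by rw [hc]; field_simp; ring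
          rw [hceq]
          rw [div_le_iff₀ (by positivity)]
          have : (r/2)^2 * (4*n) = r^2 * n := by ring
          rw [this]
          nlinarith [sq_nonneg r]
      _ = r/2 := Real.sqrt_sq (by positivity)
  · -- diam
    rintro U ⟨z, hz, rfl⟩
    constructor
    · set e : Euc n := EuclideanSpace.single (⟨0, hn⟩ : Fin n) (r/2) with he
      have hne : ‖e‖ = r/2 := by
        rw [he, EuclideanSpace.norm_single]; exact abs_of_pos (by positivity)
      have h1m : y z + e ∈ closedBall (y z) (r/2) := by
        rw [mem_closedBall, dist_self_add_left, hne]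
      have h2m : y z - e ∈ closedBall (y z) (r/2) := by
        rw [mem_closedBall, dist_self_sub_left, hne]
      have hdist : dist (y z + e) (y z - e) = r := by
        rw [dist_eq_norm]
        have h5 : (y z + e) - (y z - e) = (2:ℝ) • e := by
          rw [two_smul]; abel
        rw [h5, norm_smul, hne]
        simp; ring
      calc r = dist (y z + e) (y z - e) := hdist.symm
        _ ≤ diam (g z) := dist_le_diam_of_mem isBounded_closedBall h1m h2m
    · have := diam_closedBall (x := y z) (show 0 ≤ r/2 by positivity)
      linarith
  · -- count
    have hsurj : Function.Surjective
        (fun z : (Z : Set (Fin n → ℤ)) => (⟨g z, mem_image_of_mem g z.2⟩ : (g '' (Z : Set (Fin n → ℤ))))) := by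
      rintro ⟨U, z, hz, rfl⟩; exact ⟨⟨z, hz⟩, rfl⟩
    calc (∑' _ : ↥(g '' (Z : Set (Fin n → ℤ))), (1:ℝ≥0∞))
        ≤ ∑' _ : ↥(Z : Set (Fin n → ℤ)), (1:ℝ≥0∞) :=
          ENNReal.tsum_le_tsum_comp_of_surjective hsurj _
      _ = (Z.card : ℝ≥0∞) := by
          rw [tsum_fintype]; simp
      _ ≤ ENNReal.ofReal (((2*R*n+5)/r)^n) := by
          have h2K : (0:ℤ) ≤ 2*K+1 := by omega
          have hcard : Z.card = ((2*K+1).toNat)^n := by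
            rw [hZ, Pi.card_Icc]
            have : ∀ i : Fin n, (Finset.Icc (-K) K).card = (2*K+1).toNat := by
              intro i; rw [Int.card_Icc]; congr 1; ring
            rw [Finset.prod_congr rfl (fun i _ => this i), Finset.prod_const,
              Finset.card_univ, Fintype.card_fin]
          rw [hcard, ← ENNReal.ofReal_natCast]
          apply ENNReal.ofReal_le_ofReal
          push_cast [Int.toNat_of_nonneg h2K]
          apply pow_le_pow_left₀ (by positivity)
          have htn : (((2*K+1).toNat : ℕ) : ℝ) = ((2*K+1 : ℤ) : ℝ) := by
            exact_mod_cast congrArg (fun z : ℤ => (z:ℝ)) (Int.toNat_of_nonneg h2K)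
          rw [htn]
          have hceil : (⌈R/c⌉ : ℝ) ≤ R/c + 1 := (Int.ceil_lt_add_one _).le
          have hRc2 : R / c = R * n / r := by rw [hc]; field_simp
          have h5r : (5:ℝ) ≤ 5/r := by
            rw [le_div_iff₀ hr]; linarith
          have hsplit : (2*R*(n:ℝ)+5)/r = 2*(R*n/r) + 5/r := by field_simp
          rw [hsplit]
          push_cast
          rw [hK]
          push_cast
          linarith

lemma coverSum_lb {n : ℕ} {E : Set (Euc n)} {θ s r : ℝ} (hEne : E.Nonempty)
    (hr : 0 < r) (hs : 0 ≤ s) :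
    ENNReal.ofReal (r ^ s) ≤ coverSum n E θ s r := by
  refine le_sInf ?_
  rintro T ⟨𝒰, h𝒰, hcov, hbd, rfl⟩
  obtain ⟨x, hx⟩ := hEne
  obtain ⟨U, hU, hxU⟩ := hcov hx
  calc ENNReal.ofReal (r ^ s) ≤ ENNReal.ofReal (diam U ^ s) :=
        ENNReal.ofReal_le_ofReal (Real.rpow_le_rpow hr.le (hbd U hU).1 hs)
    _ ≤ _ := ENNReal.le_tsum (⟨U, hU⟩ : 𝒰)

lemma coverSum_ub {n : ℕ} {E : Set (Euc n)} {θ : ℝ} (hn : 0 < n)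
    (hE : Bornology.IsBounded E) (hθ : θ ∈ Ioc (0:ℝ) 1) :
    ∃ C : ℝ, 1 ≤ C ∧ ∀ s r : ℝ, 0 ≤ s → 0 < r → r ≤ 1 →
      coverSum n E θ s r ≤ ENNReal.ofReal ((C/r)^n) := by
  obtain ⟨R₀, hR₀⟩ := hE.subset_closedBall 0
  set R := max R₀ 1 with hRdef
  have hR : 1 ≤ R := le_max_right _ _
  have hn0 : (0:ℝ) < n := by exact_mod_cast hn
  refine ⟨2*R*n+5, by nlinarith, ?_⟩
  intro s r hs hr0 hr1
  obtain ⟨𝒰, hc, hcov, hbd, hsum⟩ := grid_cover hn hR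
    (hR₀.trans (closedBall_subset_closedBall (le_max_left _ _))) hr0 hr1
  have hrθ : r ≤ r ^ θ := by
    calc r = r^(1:ℝ) := (Real.rpow_one r).symm
      _ ≤ _ := Real.rpow_le_rpow_of_exponent_ge hr0 hr1 hθ.2
  refine le_trans (sInf_le ⟨𝒰, hc, hcov,
    fun U hU => ⟨(hbd U hU).1, (hbd U hU).2.trans hrθ⟩, rfl⟩) ?_
  refine le_trans (ENNReal.tsum_le_tsum fun U => ?_) hsum
  rw [← ENNReal.ofReal_one]
  exact ENNReal.ofReal_le_ofReal
    (Real.rpow_le_one diam_nonneg ((hbd U U.2).2.trans hr1) hs)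

/-- Basic facts for `n ≥ 1`. -/
lemma Squot_facts {n : ℕ} {E : Set (Euc n)} {θ : ℝ} (hn : 0 < n)
    (hE : Bornology.IsBounded E) (hEne : E.Nonempty) (hθ : θ ∈ Ioc (0:ℝ) 1)
    {s : ℝ} (hs : 0 ≤ s) :
    ∃ B : ℝ,
      (∀ᶠ r in 𝓝[>] (0:ℝ), Squot n E θ s r ≤ B) ∧
      (∀ᶠ r in 𝓝[>] (0:ℝ), -s ≤ Squot n E θ s r) ∧
      (∀ r : ℝ, 0 < r → r < 1 →
        coverSum n E θ s r ≠ ⊤ ∧ r ^ s ≤ Sval n E θ s r) := by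
  obtain ⟨C, hC1, hC⟩ := coverSum_ub hn hE hθ
  have hfacts : ∀ r : ℝ, 0 < r → r < 1 →
      coverSum n E θ s r ≠ ⊤ ∧ r ^ s ≤ Sval n E θ s r ∧ Sval n E θ s r ≤ (C/r)^n := by
    intro r hr0 hr1
    have hub := hC s r hs hr0 hr1.le
    have hfin : coverSum n E θ s r ≠ ⊤ :=
      ne_top_of_le_ne_top ENNReal.ofReal_ne_top hub
    refine ⟨hfin, ?_, ?_⟩
    · exact (ENNReal.ofReal_le_iff_le_toReal hfin).mp (coverSum_lb hEne hr0 hs)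
    · exact ENNReal.toReal_le_of_le_ofReal (by positivity) hub
  refine ⟨n * Real.log C + n, ?_, ?_, fun r h0 h1 => ⟨(hfacts r h0 h1).1, (hfacts r h0 h1).2.1⟩⟩
  · filter_upwards [Ioo_mem_nhdsGT_of_mem
      (show (0:ℝ) ∈ Ico (0:ℝ) (Real.exp (-1)) from ⟨le_refl _, Real.exp_pos _⟩)]
    intro r hr
    have hr0 : 0 < r := hr.1
    have hre : r < Real.exp (-1) := hr.2
    have hr1 : r < 1 := lt_of_lt_of_le hre (by
      rw [show (1:ℝ) = Real.exp 0 from (Real.exp_zero).symm]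
      exact (Real.exp_le_exp.mpr (by norm_num)))
    obtain ⟨hfin, hlo, hhi⟩ := hfacts r hr0 hr1
    have hL : 1 ≤ -Real.log r := by
      have : Real.log r ≤ -1 := by
        calc Real.log r ≤ Real.log (Real.exp (-1)) :=
              Real.log_le_log hr0 hre.le
          _ = -1 := Real.log_exp _
      linarith
    have hL0 : 0 < -Real.log r := by linarith
    have hSpos : 0 < Sval n E θ s r := lt_of_lt_of_le (by positivity) hlo
    have hlog : Real.log (Sval n E θ s r) ≤ n * (Real.log C - Real.log r) := by
      calc Real.log (Sval n E θ s r) ≤ Real.log ((C/r)^n) := Real.log_le_log hSpos hhi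
        _ = n * Real.log (C/r) := by rw [Real.log_pow]
        _ = n * (Real.log C - Real.log r) := by
            rw [Real.log_div (by linarith) hr0.ne']
    rw [Squot, div_le_iff₀ hL0]
    have hlogC : 0 ≤ Real.log C := Real.log_nonneg hC1
    nlinarith [hlog, mul_nonneg (mul_nonneg (Nat.cast_nonneg (α := ℝ) n) hlogC)
      (by linarith : (0:ℝ) ≤ -Real.log r - 1)]
  · filter_upwards [Ioo_mem_nhdsGT_of_mem
      (show (0:ℝ) ∈ Ico (0:ℝ) 1 from ⟨le_refl _, one_pos⟩)]
    intro r hr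
    have hr0 : 0 < r := hr.1
    obtain ⟨hfin, hlo, _⟩ := hfacts r hr.1 hr.2
    have hL0 : 0 < -Real.log r := by
      have := Real.log_neg hr.1 hr.2; linarith
    have hSpos : 0 < Sval n E θ s r := lt_of_lt_of_le (by positivity) hlo
    rw [Squot, le_div_iff₀ hL0]
    have : s * Real.log r ≤ Real.log (Sval n E θ s r) := by
      calc s * Real.log r = Real.log (r ^ s) := (Real.log_rpow hr0 s).symm
        _ ≤ _ := Real.log_le_log (by positivity) hlo
    nlinarith [this]
lemma upgrade {n : ℕ} {E : Set (Euc n)} {θ s s' : ℝ} (hEne : E.Nonempty)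
    (hθ : θ ∈ Ioc (0:ℝ) 1) (hs : 0 ≤ s) (hss' : s < s')
    {rr ε : ℝ} (h0 : 0 < rr) (h1 : rr < 1)
    (hfin : coverSum n E θ s rr ≠ ⊤)
    (hsq : Squot n E θ s rr < θ * (s' - s) / 2)
    (hε : rr ^ (θ * (s' - s) / 2) ≤ ε) :
    ∃ 𝒰 : Set (Set (Euc n)), 𝒰.Countable ∧ E ⊆ ⋃₀ 𝒰 ∧
      (∀ U ∈ 𝒰, (rr ^ θ) ^ (1/θ) ≤ diam U ∧ diam U ≤ rr ^ θ) ∧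
      (∑' U : 𝒰, ENNReal.ofReal (diam (U : Set (Euc n)) ^ s')) ≤ ENNReal.ofReal ε := by
  set η := θ * (s' - s) / 2 with hη
  have hη0 : 0 < η := by
    have := mul_pos hθ.1 (sub_pos.mpr hss'); rw [hη]; linarith
  have hL0 : 0 < -Real.log rr := by
    have := Real.log_neg h0 h1; linarith
  have hSpos : 0 < Sval n E θ s rr :=
    lt_of_lt_of_le (Real.rpow_pos_of_pos h0 s)
      ((ENNReal.ofReal_le_iff_le_toReal hfin).mp (coverSum_lb hEne h0 hs))
  have hSlt : Sval n E θ s rr < rr ^ (-η) := by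
    rw [Squot, div_lt_iff₀ hL0] at hsq
    have hlog : Real.log (Sval n E θ s rr) < Real.log (rr ^ (-η)) := by
      rw [Real.log_rpow h0]; nlinarith
    calc Sval n E θ s rr = Real.exp (Real.log (Sval n E θ s rr)) :=
          (Real.exp_log hSpos).symm
      _ < Real.exp (Real.log (rr ^ (-η))) := Real.exp_lt_exp.mpr hlog
      _ = rr ^ (-η) := Real.exp_log (Real.rpow_pos_of_pos h0 _)
  have hcs : coverSum n E θ s rr < ENNReal.ofReal (rr ^ (-η)) := by
    rw [← ENNReal.ofReal_toReal hfin]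
    exact (ENNReal.ofReal_lt_ofReal_iff (Real.rpow_pos_of_pos h0 _)).mpr hSlt
  rw [coverSum, sInf_lt_iff] at hcs
  obtain ⟨T, ⟨𝒰, h𝒰, hcov, hbd, rfl⟩, hTlt⟩ := hcs
  have hpow : (rr ^ θ) ^ (1/θ) = rr := by
    rw [← Real.rpow_mul h0.le, mul_one_div_cancel hθ.1.ne', Real.rpow_one]
  refine ⟨𝒰, h𝒰, hcov, fun U hU => by rw [hpow]; exact hbd U hU, ?_⟩
  have hterm : ∀ U : 𝒰, ENNReal.ofReal (diam (U : Set (Euc n)) ^ s')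
      ≤ ENNReal.ofReal ((rr ^ θ) ^ (s' - s)) * ENNReal.ofReal (diam (U : Set (Euc n)) ^ s) := by
    intro U
    have hd0 : 0 < diam (U : Set (Euc n)) := lt_of_lt_of_le h0 (hbd U U.2).1
    rw [← ENNReal.ofReal_mul (Real.rpow_nonneg (Real.rpow_nonneg h0.le θ) _)]
    apply ENNReal.ofReal_le_ofReal
    calc diam (U : Set (Euc n)) ^ s'
        = diam (U : Set (Euc n)) ^ (s' - s) * diam (U : Set (Euc n)) ^ s := by
          rw [← Real.rpow_add hd0, sub_add_cancel]
      _ ≤ (rr ^ θ) ^ (s' - s) * diam (U : Set (Euc n)) ^ s := by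
          apply mul_le_mul_of_nonneg_right _ (Real.rpow_nonneg hd0.le s)
          exact Real.rpow_le_rpow hd0.le (hbd U U.2).2 (by linarith)
  calc (∑' U : 𝒰, ENNReal.ofReal (diam (U : Set (Euc n)) ^ s'))
      ≤ ∑' U : 𝒰, ENNReal.ofReal ((rr ^ θ) ^ (s' - s)) * ENNReal.ofReal (diam (U : Set (Euc n)) ^ s) :=
        ENNReal.tsum_le_tsum hterm
    _ = ENNReal.ofReal ((rr ^ θ) ^ (s' - s)) * ∑' U : 𝒰, ENNReal.ofReal (diam (U : Set (Euc n)) ^ s) :=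
        ENNReal.tsum_mul_left
    _ ≤ ENNReal.ofReal ((rr ^ θ) ^ (s' - s)) * ENNReal.ofReal (rr ^ (-η)) :=
        mul_le_mul_right hTlt.le _
    _ = ENNReal.ofReal ((rr ^ θ) ^ (s' - s) * rr ^ (-η)) :=
        (ENNReal.ofReal_mul (Real.rpow_nonneg (Real.rpow_nonneg h0.le θ) _)).symm
    _ ≤ ENNReal.ofReal ε := by
        apply ENNReal.ofReal_le_ofReal
        have heq : (rr ^ θ) ^ (s' - s) * rr ^ (-η) = rr ^ η := by
          rw [← Real.rpow_mul h0.le, ← Real.rpow_add h0]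
          congr 1
          rw [hη]; ring
        rw [heq]; exact hε

lemma downgrade {n : ℕ} {E : Set (Euc n)} {θ s s' : ℝ} (hEne : E.Nonempty)
    (hθ : θ ∈ Ioc (0:ℝ) 1) (hs' : 0 ≤ s') (hlt : s' < s)
    {ρ : ℝ} (h0 : 0 < ρ) (h1 : ρ < 1)
    (hcov : ∃ 𝒰 : Set (Set (Euc n)), 𝒰.Countable ∧ E ⊆ ⋃₀ 𝒰 ∧
      (∀ U ∈ 𝒰, ρ ≤ diam U ∧ diam U ≤ ρ ^ θ) ∧
      (∑' U : 𝒰, ENNReal.ofReal (diam (U : Set (Euc n)) ^ s')) ≤ 1) :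
    Squot n E θ s ρ ≤ -(θ * (s - s')) := by
  obtain ⟨𝒰, h𝒰, hcovE, hbd, hsum⟩ := hcov
  have hs : 0 ≤ s := le_trans hs' hlt.le
  have hL0 : 0 < -Real.log ρ := by
    have := Real.log_neg h0 h1; linarith
  have hterm : ∀ U : 𝒰, ENNReal.ofReal (diam (U : Set (Euc n)) ^ s)
      ≤ ENNReal.ofReal ((ρ ^ θ) ^ (s - s')) * ENNReal.ofReal (diam (U : Set (Euc n)) ^ s') := by
    intro U
    have hd0 : 0 < diam (U : Set (Euc n)) := lt_of_lt_of_le h0 (hbd U U.2).1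
    rw [← ENNReal.ofReal_mul (Real.rpow_nonneg (Real.rpow_nonneg h0.le θ) _)]
    apply ENNReal.ofReal_le_ofReal
    calc diam (U : Set (Euc n)) ^ s
        = diam (U : Set (Euc n)) ^ (s - s') * diam (U : Set (Euc n)) ^ s' := by
          rw [← Real.rpow_add hd0, sub_add_cancel]
      _ ≤ (ρ ^ θ) ^ (s - s') * diam (U : Set (Euc n)) ^ s' := by
          apply mul_le_mul_of_nonneg_right _ (Real.rpow_nonneg hd0.le s')
          exact Real.rpow_le_rpow hd0.le (hbd U U.2).2 (by linarith)
  have hub : coverSum n E θ s ρ ≤ ENNReal.ofReal ((ρ ^ θ) ^ (s - s')) := by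
    refine le_trans (sInf_le ⟨𝒰, h𝒰, hcovE, hbd, rfl⟩) ?_
    calc (∑' U : 𝒰, ENNReal.ofReal (diam (U : Set (Euc n)) ^ s))
        ≤ ∑' U : 𝒰, ENNReal.ofReal ((ρ ^ θ) ^ (s - s')) * ENNReal.ofReal (diam (U : Set (Euc n)) ^ s') :=
          ENNReal.tsum_le_tsum hterm
      _ = ENNReal.ofReal ((ρ ^ θ) ^ (s - s')) * ∑' U : 𝒰, ENNReal.ofReal (diam (U : Set (Euc n)) ^ s') :=
          ENNReal.tsum_mul_left
      _ ≤ ENNReal.ofReal ((ρ ^ θ) ^ (s - s')) * 1 := mul_le_mul_right hsum _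
      _ = _ := mul_one _
  have hfin : coverSum n E θ s ρ ≠ ⊤ := ne_top_of_le_ne_top ENNReal.ofReal_ne_top hub
  have hSpos : 0 < Sval n E θ s ρ :=
    lt_of_lt_of_le (Real.rpow_pos_of_pos h0 s)
      ((ENNReal.ofReal_le_iff_le_toReal hfin).mp (coverSum_lb hEne h0 hs))
  have hSle : Sval n E θ s ρ ≤ (ρ ^ θ) ^ (s - s') :=
    ENNReal.toReal_le_of_le_ofReal (Real.rpow_nonneg (Real.rpow_nonneg h0.le θ) _) hub
  have hlog : Real.log (Sval n E θ s ρ) ≤ (θ * (s - s')) * Real.log ρ := by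
    calc Real.log (Sval n E θ s ρ) ≤ Real.log ((ρ ^ θ) ^ (s - s')) :=
          Real.log_le_log hSpos hSle
      _ = (s - s') * (θ * Real.log ρ) := by
          rw [Real.log_rpow (Real.rpow_pos_of_pos h0 θ), Real.log_rpow h0]
      _ = (θ * (s - s')) * Real.log ρ := by ring
  rw [Squot, div_le_iff₀ hL0]
  nlinarith [hlog]
lemma cancel_aux {a : ℝ} (ha : 0 < a) : 2/a * (a/2) = 1 := by
  field_simp

/-- The infimum definitions of the lower and upper intermediate dimensions
agree with the unique roots of the lower/upper limits of `log S_{r,θ}^s(E)/(-log r)`. -/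
theorem statement2 (n : ℕ) (θ : ℝ) (hθ : θ ∈ Ioc (0:ℝ) 1)
    (E : Set (Euc n)) (hE : Bornology.IsBounded E) (hEne : E.Nonempty) :
    (∀ s : ℝ, s ∈ Icc (0:ℝ) n → liminf (fun r => Squot n E θ s r) (𝓝[>] 0) = 0 →
      sInf { s' : ℝ | 0 ≤ s' ∧ ∀ ε : ℝ, 0 < ε → ∀ r₀ : ℝ, 0 < r₀ →
        ∃ r : ℝ, 0 < r ∧ r ≤ r₀ ∧
          ∃ 𝒰 : Set (Set (Euc n)), 𝒰.Countable ∧ E ⊆ ⋃₀ 𝒰 ∧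
            (∀ U ∈ 𝒰, r ^ (1/θ) ≤ diam U ∧ diam U ≤ r) ∧
            (∑' U : 𝒰, ENNReal.ofReal (diam (U : Set (Euc n)) ^ s'))
              ≤ ENNReal.ofReal ε } = s) ∧
    (∀ s : ℝ, s ∈ Icc (0:ℝ) n → limsup (fun r => Squot n E θ s r) (𝓝[>] 0) = 0 →
      sInf { s' : ℝ | 0 ≤ s' ∧ ∀ ε : ℝ, 0 < ε → ∃ r₀ : ℝ, 0 < r₀ ∧
        ∀ r : ℝ, 0 < r → r ≤ r₀ →
          ∃ 𝒰 : Set (Set (Euc n)), 𝒰.Countable ∧ E ⊆ ⋃₀ 𝒰 ∧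
            (∀ U ∈ 𝒰, r ^ (1/θ) ≤ diam U ∧ diam U ≤ r) ∧
            (∑' U : 𝒰, ENNReal.ofReal (diam (U : Set (Euc n)) ^ s'))
              ≤ ENNReal.ofReal ε } = s) := by
  --

  obtain ⟨hθ0, hθ1⟩ := hθ
  have hdiam0 : n = 0 → ∀ U : Set (Euc n), diam U = 0 := by
    rintro rfl U
    exact Metric.diam_subsingleton (subsingleton_of_subsingleton)
  constructor
  · -- liminf part
    intro s hsI hlim
    rcases Nat.eq_zero_or_pos n with hn | hn
    · -- n = 0
      have hs0 : s = 0 := le_antisymm (by simpa [hn] using hsI.2) hsI.1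
      rw [hs0]
      convert Real.sInf_empty using 2
      ext s'
      simp only [mem_setOf_eq, mem_empty_iff_false, iff_false, not_and]
      intro _ hs'
      obtain ⟨r, hr0, _, 𝒰, _, hcov, hbd, -⟩ := hs' 1 one_pos 1 one_pos
      obtain ⟨x, hx⟩ := hEne
      obtain ⟨U, hU, -⟩ := hcov hx
      have := (hbd U hU).1
      rw [hdiam0 hn U] at this
      exact absurd this (not_le.mpr (Real.rpow_pos_of_pos hr0 _))
    · -- n ≥ 1
      obtain ⟨B, hB, hlow, hfacts⟩ := Squot_facts hn hE hEne ⟨hθ0, hθ1⟩ hsI.1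
      have hBdd : IsBoundedUnder (· ≤ ·) (𝓝[>] (0:ℝ)) (fun r => Squot n E θ s r) :=
        ⟨B, eventually_map.mpr hB⟩
      have hBddLow : IsBoundedUnder (· ≥ ·) (𝓝[>] (0:ℝ)) (fun r => Squot n E θ s r) :=
        ⟨-s, eventually_map.mpr hlow⟩
      have hmem : ∀ s' : ℝ, s < s' →
          s' ∈ { s' : ℝ | 0 ≤ s' ∧ ∀ ε : ℝ, 0 < ε → ∀ r₀ : ℝ, 0 < r₀ →
            ∃ r : ℝ, 0 < r ∧ r ≤ r₀ ∧
              ∃ 𝒰 : Set (Set (Euc n)), 𝒰.Countable ∧ E ⊆ ⋃₀ 𝒰 ∧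
                (∀ U ∈ 𝒰, r ^ (1/θ) ≤ diam U ∧ diam U ≤ r) ∧
                (∑' U : 𝒰, ENNReal.ofReal (diam (U : Set (Euc n)) ^ s'))
                  ≤ ENNReal.ofReal ε } := by
        intro s' hss'
        have hη0 : 0 < θ * (s' - s)/2 := by
          have := mul_pos hθ0 (sub_pos.mpr hss'); linarith
        refine ⟨le_trans hsI.1 hss'.le, ?_⟩
        intro ε hε r₀ hr₀
        have hfreq : ∃ᶠ rr in 𝓝[>] (0:ℝ), Squot n E θ s rr < θ*(s'-s)/2 := by
          apply frequently_lt_of_liminf_lt (hBdd.isCoboundedUnder_ge)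
          rw [hlim]; exact hη0
        have ha0 : 0 < min (1/2) (min (r₀ ^ (1/θ)) (ε ^ (2/(θ*(s'-s))))) := by
          apply lt_min (by norm_num)
          exact lt_min (Real.rpow_pos_of_pos hr₀ _) (Real.rpow_pos_of_pos hε _)
        obtain ⟨rr, hrrmem, hrrsq⟩ := frequently_iff.mp hfreq
          (Ioo_mem_nhdsGT_of_mem ⟨le_refl (0:ℝ), ha0⟩)
        have h0 : 0 < rr := hrrmem.1
        have h1 : rr < 1 := by
          have h2 := lt_of_lt_of_le hrrmem.2 (min_le_left _ _); linarith
        have hεb : rr ^ (θ*(s'-s)/2) ≤ ε := by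
          have hrle : rr ≤ ε ^ (2/(θ*(s'-s))) :=
            le_trans hrrmem.2.le ((min_le_right _ _).trans (min_le_right _ _))
          calc rr ^ (θ*(s'-s)/2) ≤ (ε ^ (2/(θ*(s'-s)))) ^ (θ*(s'-s)/2) :=
                Real.rpow_le_rpow h0.le hrle hη0.le
            _ = ε := by
                rw [← Real.rpow_mul hε.le, cancel_aux (by linarith : 0 < θ*(s'-s))]
                exact Real.rpow_one ε
        obtain ⟨𝒰, hc, hcov, hbd, hsum⟩ :=
          upgrade hEne ⟨hθ0, hθ1⟩ hsI.1 hss' h0 h1 (hfacts rr h0 h1).1 hrrsq hεb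
        refine ⟨rr ^ θ, Real.rpow_pos_of_pos h0 θ, ?_, 𝒰, hc, hcov, hbd, hsum⟩
        have hrle : rr ≤ r₀ ^ (1/θ) :=
          le_trans hrrmem.2.le ((min_le_right _ _).trans (min_le_left _ _))
        calc rr ^ θ ≤ (r₀ ^ (1/θ)) ^ θ := Real.rpow_le_rpow h0.le hrle hθ0.le
          _ = r₀ := by
              rw [← Real.rpow_mul hr₀.le, one_div_mul_cancel hθ0.ne', Real.rpow_one]
      apply le_antisymm
      · by_contra hcon
        push_neg at hcon
        obtain ⟨t, hst, htI⟩ := exists_between hcon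
        exact absurd (csInf_le ⟨0, fun x hx => hx.1⟩ (hmem t hst)) (not_le.mpr htI)
      · refine le_csInf ⟨s+1, hmem _ (by linarith)⟩ ?_
        intro s' hs'
        by_contra hcon
        push_neg at hcon
        have hfreq2 : ∃ᶠ ρ in 𝓝[>] (0:ℝ), Squot n E θ s ρ ≤ -(θ*(s - s')) := by
          rw [frequently_iff]
          intro M hM
          obtain ⟨b, hb, hsub⟩ := mem_nhdsGT_iff_exists_Ioo_subset.mp hM
          have hb0 : (0:ℝ) < b := hb
          have hβ0 : 0 < min b 1 := lt_min hb0 one_pos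
          obtain ⟨r, hr0, hrle, 𝒰, hc, hcov, hbd, hsum⟩ :=
            hs'.2 1 one_pos ((min b 1/2) ^ θ) (Real.rpow_pos_of_pos (by linarith) θ)
          have hρ0 : 0 < r ^ (1/θ) := Real.rpow_pos_of_pos hr0 _
          have hρθ : (r ^ (1/θ)) ^ θ = r := by
            rw [← Real.rpow_mul hr0.le, one_div_mul_cancel hθ0.ne', Real.rpow_one]
          have hρle : r ^ (1/θ) ≤ min b 1/2 := by
            calc r ^ (1/θ) ≤ ((min b 1/2) ^ θ) ^ (1/θ) :=
                  Real.rpow_le_rpow hr0.le hrle (by positivity)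
              _ = min b 1/2 := by
                  rw [← Real.rpow_mul (by linarith), mul_one_div_cancel hθ0.ne', Real.rpow_one]
          have hρ1 : r ^ (1/θ) < 1 := by
            have hβ1 : min b 1 ≤ 1 := min_le_right _ _; linarith
          have hρb : r ^ (1/θ) < b := by
            have hβb : min b 1 ≤ b := min_le_left _ _; linarith
          refine ⟨r ^ (1/θ), hsub ⟨hρ0, hρb⟩, ?_⟩
          apply downgrade hEne ⟨hθ0, hθ1⟩ hs'.1 hcon hρ0 hρ1
          refine ⟨𝒰, hc, hcov, fun U hU => ⟨(hbd U hU).1, ?_⟩,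
            by rwa [ENNReal.ofReal_one] at hsum⟩
          rw [hρθ]; exact (hbd U hU).2
        have hliminf_le : liminf (fun r => Squot n E θ s r) (𝓝[>] (0:ℝ)) ≤ -(θ*(s-s')) :=
          liminf_le_of_frequently_le hfreq2 hBddLow
        rw [hlim] at hliminf_le
        nlinarith [mul_pos hθ0 (sub_pos.mpr hcon)]
  · -- limsup part
    intro s hsI hlim
    rcases Nat.eq_zero_or_pos n with hn | hn
    · have hs0 : s = 0 := le_antisymm (by simpa [hn] using hsI.2) hsI.1
      rw [hs0]
      convert Real.sInf_empty using 2
      ext s'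
      simp only [mem_setOf_eq, mem_empty_iff_false, iff_false, not_and]
      intro _ hs'
      obtain ⟨r₀, hr₀, hall⟩ := hs' 1 one_pos
      obtain ⟨𝒰, _, hcov, hbd, -⟩ := hall r₀ hr₀ le_rfl
      obtain ⟨x, hx⟩ := hEne
      obtain ⟨U, hU, -⟩ := hcov hx
      have := (hbd U hU).1
      rw [hdiam0 hn U] at this
      exact absurd this (not_le.mpr (Real.rpow_pos_of_pos hr₀ _))
    · obtain ⟨B, hB, hlow, hfacts⟩ := Squot_facts hn hE hEne ⟨hθ0, hθ1⟩ hsI.1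
      have hBdd : IsBoundedUnder (· ≤ ·) (𝓝[>] (0:ℝ)) (fun r => Squot n E θ s r) :=
        ⟨B, eventually_map.mpr hB⟩
      have hBddLow : IsBoundedUnder (· ≥ ·) (𝓝[>] (0:ℝ)) (fun r => Squot n E θ s r) :=
        ⟨-s, eventually_map.mpr hlow⟩
      have hmem : ∀ s' : ℝ, s < s' →
          s' ∈ { s' : ℝ | 0 ≤ s' ∧ ∀ ε : ℝ, 0 < ε → ∃ r₀ : ℝ, 0 < r₀ ∧
            ∀ r : ℝ, 0 < r → r ≤ r₀ →
              ∃ 𝒰 : Set (Set (Euc n)), 𝒰.Countable ∧ E ⊆ ⋃₀ 𝒰 ∧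
                (∀ U ∈ 𝒰, r ^ (1/θ) ≤ diam U ∧ diam U ≤ r) ∧
                (∑' U : 𝒰, ENNReal.ofReal (diam (U : Set (Euc n)) ^ s'))
                  ≤ ENNReal.ofReal ε } := by
        intro s' hss'
        have hη0 : 0 < θ * (s' - s)/2 := by
          have := mul_pos hθ0 (sub_pos.mpr hss'); linarith
        refine ⟨le_trans hsI.1 hss'.le, ?_⟩
        intro ε hε
        have hev : ∀ᶠ rr in 𝓝[>] (0:ℝ), Squot n E θ s rr < θ*(s'-s)/2 := by
          apply eventually_lt_of_limsup_lt _ hBdd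
          rw [hlim]; exact hη0
        obtain ⟨a, ha, hsub⟩ :=
          mem_nhdsGT_iff_exists_Ioo_subset.mp (eventually_iff.mp hev)
        have ha0 : (0:ℝ) < a := ha
        have hm0 : 0 < min (a/2) (min (ε ^ (2/(θ*(s'-s)))) (1/2)) := by
          apply lt_min (by linarith)
          exact lt_min (Real.rpow_pos_of_pos hε _) (by norm_num)
        set m := min (a/2) (min (ε ^ (2/(θ*(s'-s)))) (1/2)) with hm
        refine ⟨m ^ θ, Real.rpow_pos_of_pos hm0 θ, ?_⟩
        intro r hr0 hrm
        have hrr0 : 0 < r ^ (1/θ) := Real.rpow_pos_of_pos hr0 _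
        have hrrθ : (r ^ (1/θ)) ^ θ = r := by
          rw [← Real.rpow_mul hr0.le, one_div_mul_cancel hθ0.ne', Real.rpow_one]
        have hrrm : r ^ (1/θ) ≤ m := by
          calc r ^ (1/θ) ≤ (m ^ θ) ^ (1/θ) :=
                Real.rpow_le_rpow hr0.le hrm (by positivity)
            _ = m := by
                rw [← Real.rpow_mul hm0.le, mul_one_div_cancel hθ0.ne', Real.rpow_one]
        have h1 : r ^ (1/θ) < 1 := by
          have : m ≤ 1/2 := (min_le_right _ _).trans (min_le_right _ _); linarith
        have hrra : r ^ (1/θ) < a := by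
          have : m ≤ a/2 := min_le_left _ _; linarith
        have hsq : Squot n E θ s (r ^ (1/θ)) < θ*(s'-s)/2 := hsub ⟨hrr0, hrra⟩
        have hεb : (r ^ (1/θ)) ^ (θ*(s'-s)/2) ≤ ε := by
          have hrle : r ^ (1/θ) ≤ ε ^ (2/(θ*(s'-s))) :=
            hrrm.trans ((min_le_right _ _).trans (min_le_left _ _))
          calc (r ^ (1/θ)) ^ (θ*(s'-s)/2) ≤ (ε ^ (2/(θ*(s'-s)))) ^ (θ*(s'-s)/2) :=
                Real.rpow_le_rpow hrr0.le hrle hη0.le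
            _ = ε := by
                rw [← Real.rpow_mul hε.le, cancel_aux (by linarith : 0 < θ*(s'-s))]
                exact Real.rpow_one ε
        obtain ⟨𝒰, hc, hcov, hbd, hsum⟩ :=
          upgrade hEne ⟨hθ0, hθ1⟩ hsI.1 hss' hrr0 h1
            (hfacts (r ^ (1/θ)) hrr0 h1).1 hsq hεb
        refine ⟨𝒰, hc, hcov, fun U hU => ⟨?_, ?_⟩, hsum⟩
        · rw [← hrrθ]; exact (hbd U hU).1
        · rw [← hrrθ]; exact (hbd U hU).2
      apply le_antisymm
      · by_contra hcon
        push_neg at hcon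
        obtain ⟨t, hst, htI⟩ := exists_between hcon
        exact absurd (csInf_le ⟨0, fun x hx => hx.1⟩ (hmem t hst)) (not_le.mpr htI)
      · refine le_csInf ⟨s+1, hmem _ (by linarith)⟩ ?_
        intro s' hs'
        by_contra hcon
        push_neg at hcon
        obtain ⟨r₀, hr₀, hall⟩ := hs'.2 1 one_pos
        have hu0 : 0 < min (r₀ ^ (1/θ)) 1 := lt_min (Real.rpow_pos_of_pos hr₀ _) one_pos
        have hev2 : ∀ᶠ ρ in 𝓝[>] (0:ℝ), Squot n E θ s ρ ≤ -(θ*(s - s')) := by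
          filter_upwards [Ioo_mem_nhdsGT_of_mem
            (show (0:ℝ) ∈ Ico (0:ℝ) (min (r₀ ^ (1/θ)) 1) from ⟨le_refl _, hu0⟩)]
          intro ρ hρ
          have hρ0 : 0 < ρ := hρ.1
          have hρ1 : ρ < 1 := lt_of_lt_of_le hρ.2 (min_le_right _ _)
          have hρr₀ : ρ ^ θ ≤ r₀ := by
            have hle : ρ ≤ r₀ ^ (1/θ) := le_trans hρ.2.le (min_le_left _ _)
            calc ρ ^ θ ≤ (r₀ ^ (1/θ)) ^ θ := Real.rpow_le_rpow hρ0.le hle hθ0.le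
              _ = r₀ := by
                  rw [← Real.rpow_mul hr₀.le, one_div_mul_cancel hθ0.ne', Real.rpow_one]
          obtain ⟨𝒰, hc, hcov, hbd, hsum⟩ := hall (ρ ^ θ) (Real.rpow_pos_of_pos hρ0 θ) hρr₀
          apply downgrade hEne ⟨hθ0, hθ1⟩ hs'.1 hcon hρ0 hρ1
          have hpow3 : (ρ ^ θ) ^ (1/θ) = ρ := by
            rw [← Real.rpow_mul hρ0.le, mul_one_div_cancel hθ0.ne', Real.rpow_one]
          refine ⟨𝒰, hc, hcov, fun U hU => ⟨?_, (hbd U hU).2⟩,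
            by rwa [ENNReal.ofReal_one] at hsum⟩
          rw [← hpow3]; exact (hbd U hU).1
        have hlimsup_le : limsup (fun r => Squot n E θ s r) (𝓝[>] (0:ℝ)) ≤ -(θ*(s-s')) :=
          limsup_le_of_le (hBddLow.isCoboundedUnder_le) hev2
        rw [hlim] at hlimsup_le
        nlinarith [mul_pos hθ0 (sub_pos.mpr hcon)]
end
end

section
/- Let E ⊂ ℝ^n be nonempty and compact, m ∈ {1,…,n} and θ ∈ (0,1]. (i) For every 0 < r < 1 and all 0 ≤ t ≤ s ≤ m, −(s−t) ≤ ((log C_{r,θ}^{s,m}(E))/(−log r) − s) − ((log C_{r,θ}^{t,m}(E))/(−log r) − t) ≤ −θ(s−t). (ii) There is a unique s ∈ [0,m] such that liminf_{r→0} (log C_{r,θ}^{s,m}(E))/(−log r) = s, and a unique s ∈ [0,m] such that limsup_{r→0} (log C_{r,θ}^{s,m}(E))/(−log r) = s. -/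
open MeasureTheory Metric Set Filter Topology
open scoped ENNReal NNReal

noncomputable section

/-! Lowering the exponent from `s` to `t` raises the kernel `φ_{r,θ}^{s,m}` pointwise, but by at
most the factor `r ^ (-(1 - θ) * (s - t))`. Passing to infimal energies and then to
`log C / (-log r)` gives (i): the quotient is nondecreasing in `s` with slope at most `1 - θ`.
These bounds survive `liminf` and `limsup`, so `s ↦ s - liminf` (or `limsup`) is continuous and
strictly increasing on `[0, m]`; it is `≤ 0` at `0` because capacities are `≥ 1` (the kernel is
`≤ 1`), and `≥ 0` at `m` because `C^{m,m}_{r,θ}(E) ≤ (max (diam E) 1 / r) ^ m`. Hence it has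
exactly one zero. -/

theorem existsUnique_eq_self_of_le_add {G : ℝ → ℝ} {M c : ℝ} (hM : 0 ≤ M) (hc : c < 1)
    (hG : ∀ t s, 0 ≤ t → t ≤ s → s ≤ M → G t ≤ G s ∧ G s ≤ G t + c * (s - t))
    (hG0 : 0 ≤ G 0) (hGM : G M ≤ M) :
    ∃! s, s ∈ Icc 0 M ∧ G s = s := by
  set H : ℝ → ℝ := fun s => s - G s
  have hstep : ∀ t ∈ Icc 0 M, ∀ s ∈ Icc 0 M, t ≤ s →
      (1 - c) * (s - t) ≤ H s - H t ∧ H s - H t ≤ s - t := by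
    intro t ht s hs hts
    obtain ⟨h₁, h₂⟩ := hG t s ht.1 hts hs.2
    constructor <;> linarith
  have hmono : StrictMonoOn H (Icc 0 M) := fun t ht s hs hts => by
    nlinarith [(hstep t ht s hs hts.le).1]
  have hlip : ∀ s ∈ Icc 0 M, ∀ t ∈ Icc 0 M, |H s - H t| ≤ |s - t| := by
    intro s hs t ht
    rcases le_total t s with h | h
    · obtain ⟨h₁, h₂⟩ := hstep t ht s hs h
      exact abs_le_abs h₂ (by nlinarith)
    · obtain ⟨h₁, h₂⟩ := hstep s hs t ht h
      rw [abs_sub_comm, abs_sub_comm s]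
      exact abs_le_abs h₂ (by nlinarith)
  have hcont : ContinuousOn H (Icc 0 M) :=
    (LipschitzOnWith.of_dist_le_mul (K := 1) fun s hs t ht => by
      simpa [Real.dist_eq] using hlip s hs t ht).continuousOn
  obtain ⟨s, hs, hs0⟩ := intermediate_value_Icc hM hcont (show (0 : ℝ) ∈ Icc (H 0) (H M) from
    ⟨by simp [H, hG0], by simp [H, hGM]⟩)
  refine ⟨s, ⟨hs, by simp [H] at hs0; linarith⟩, fun t ⟨ht, htG⟩ => hmono.injOn ht hs ?_⟩
  simp [H, htG, hs0]

section Limits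

variable {α : Type*} {l : Filter α} {F : ℝ → α → ℝ} {u : α → ℝ} {M c : ℝ}

lemma eventually_mem_Icc_of_le_add
    (hF : ∀ t s, 0 ≤ t → t ≤ s → s ≤ M → ∀ᶠ x in l, F t x ≤ F s x ∧ F s x ≤ F t x + c * (s - t))
    (hF0 : ∀ᶠ x in l, 0 ≤ F 0 x) (hFM : ∀ᶠ x in l, F M x ≤ u x) (hu : Tendsto u l (𝓝 M))
    {s : ℝ} (hs : s ∈ Icc 0 M) : ∀ᶠ x in l, F s x ∈ Icc 0 (M + 1) := by
  filter_upwards [hF0, hF 0 s le_rfl hs.1 hs.2, hF s M hs.1 hs.2 le_rfl, hFM,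
    hu.eventually (gt_mem_nhds (lt_add_one M))] with x h0 h0s hsM hMu hu1
  exact ⟨h0.trans h0s.1, hsM.1.trans (hMu.trans hu1.le)⟩

variable [l.NeBot]

lemma liminf_le_liminf_and_le_add {f g : α → ℝ} {a b c : ℝ} (hf : ∀ᶠ x in l, f x ∈ Icc a b)
    (hfg : ∀ᶠ x in l, f x ≤ g x) (hgf : ∀ᶠ x in l, g x ≤ f x + c) :
    liminf f l ≤ liminf g l ∧ liminf g l ≤ liminf f l + c := by
  have hf_ge : IsBoundedUnder (· ≥ ·) l f :=
    isBoundedUnder_of_eventually_ge (hf.mono fun _ h => h.1)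
  have hf_le : IsBoundedUnder (· ≤ ·) l f :=
    isBoundedUnder_of_eventually_le (hf.mono fun _ h => h.2)
  have hfc_le : IsBoundedUnder (· ≤ ·) l (fun x => f x + c) :=
    isBoundedUnder_of_eventually_le (a := b + c) (hf.mono fun _ h => by linarith [h.2])
  have hg_ge : IsBoundedUnder (· ≥ ·) l g :=
    isBoundedUnder_of_eventually_ge (a := a) ((hf.and hfg).mono fun _ h => by linarith [h.1.1])
  refine ⟨liminf_le_liminf hfg hf_ge (hfc_le.mono_le hgf).isCoboundedUnder_ge, ?_⟩
  rw [← liminf_add_const l f c hf_le.isCoboundedUnder_ge hf_ge]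
  exact liminf_le_liminf hgf hg_ge hfc_le.isCoboundedUnder_ge

lemma limsup_le_limsup_and_le_add {f g : α → ℝ} {a b c : ℝ} (hf : ∀ᶠ x in l, f x ∈ Icc a b)
    (hfg : ∀ᶠ x in l, f x ≤ g x) (hgf : ∀ᶠ x in l, g x ≤ f x + c) :
    limsup f l ≤ limsup g l ∧ limsup g l ≤ limsup f l + c := by
  have hf_ge : IsBoundedUnder (· ≥ ·) l f :=
    isBoundedUnder_of_eventually_ge (hf.mono fun _ h => h.1)
  have hf_le : IsBoundedUnder (· ≤ ·) l f :=
    isBoundedUnder_of_eventually_le (hf.mono fun _ h => h.2)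
  have hfc_le : IsBoundedUnder (· ≤ ·) l (fun x => f x + c) :=
    isBoundedUnder_of_eventually_le (a := b + c) (hf.mono fun _ h => by linarith [h.2])
  have hg_ge : IsBoundedUnder (· ≥ ·) l g :=
    isBoundedUnder_of_eventually_ge (a := a) ((hf.and hfg).mono fun _ h => by linarith [h.1.1])
  refine ⟨limsup_le_limsup hfg hf_ge.isCoboundedUnder_le (hfc_le.mono_le hgf), ?_⟩
  rw [← limsup_add_const l f c hf_le hf_ge.isCoboundedUnder_le]
  exact limsup_le_limsup hgf hg_ge.isCoboundedUnder_le hfc_le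

theorem existsUnique_liminf_eq_self (hM : 0 ≤ M) (hc : c < 1)
    (hF : ∀ t s, 0 ≤ t → t ≤ s → s ≤ M → ∀ᶠ x in l, F t x ≤ F s x ∧ F s x ≤ F t x + c * (s - t))
    (hF0 : ∀ᶠ x in l, 0 ≤ F 0 x) (hFM : ∀ᶠ x in l, F M x ≤ u x) (hu : Tendsto u l (𝓝 M)) :
    ∃! s, s ∈ Icc 0 M ∧ liminf (F s) l = s := by
  have hbdd := fun s hs => eventually_mem_Icc_of_le_add hF hF0 hFM hu (s := s) hs
  refine existsUnique_eq_self_of_le_add hM hc (fun t s ht hts hsM => ?_) ?_ ?_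
  · have hF' := hF t s ht hts hsM
    exact liminf_le_liminf_and_le_add (hbdd t ⟨ht, hts.trans hsM⟩) (hF'.mono fun _ h => h.1)
      (hF'.mono fun _ h => h.2)
  · exact le_liminf_of_le (isBoundedUnder_of_eventually_le
      ((hbdd 0 ⟨le_rfl, hM⟩).mono fun _ h => h.2)).isCoboundedUnder_ge hF0
  · calc liminf (F M) l ≤ liminf u l := liminf_le_liminf hFM
          (isBoundedUnder_of_eventually_ge ((hbdd M ⟨hM, le_rfl⟩).mono fun _ h => h.1))
          hu.isBoundedUnder_le.isCoboundedUnder_ge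
      _ = M := hu.liminf_eq

theorem existsUnique_limsup_eq_self (hM : 0 ≤ M) (hc : c < 1)
    (hF : ∀ t s, 0 ≤ t → t ≤ s → s ≤ M → ∀ᶠ x in l, F t x ≤ F s x ∧ F s x ≤ F t x + c * (s - t))
    (hF0 : ∀ᶠ x in l, 0 ≤ F 0 x) (hFM : ∀ᶠ x in l, F M x ≤ u x) (hu : Tendsto u l (𝓝 M)) :
    ∃! s, s ∈ Icc 0 M ∧ limsup (F s) l = s := by
  have hbdd := fun s hs => eventually_mem_Icc_of_le_add hF hF0 hFM hu (s := s) hs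
  refine existsUnique_eq_self_of_le_add hM hc (fun t s ht hts hsM => ?_) ?_ ?_
  · have hF' := hF t s ht hts hsM
    exact limsup_le_limsup_and_le_add (hbdd t ⟨ht, hts.trans hsM⟩) (hF'.mono fun _ h => h.1)
      (hF'.mono fun _ h => h.2)
  · exact le_limsup_of_le (isBoundedUnder_of_eventually_le
      ((hbdd 0 ⟨le_rfl, hM⟩).mono fun _ h => h.2)) fun b hb =>
      (hF0.and hb).exists.elim fun _ h => h.1.trans h.2
  · calc limsup (F M) l ≤ limsup u l := limsup_le_limsup hFM
          (isBoundedUnder_of_eventually_ge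
            ((hbdd M ⟨hM, le_rfl⟩).mono fun _ h => h.1)).isCoboundedUnder_le
          hu.isBoundedUnder_le
      _ = M := hu.limsup_eq

end Limits

section Kernel

variable {n : ℕ} {m s t θ r : ℝ}

lemma measurable_phiK : Measurable (phiK n m s θ r) := by
  unfold phiK
  refine Measurable.ite (measurableSet_lt measurable_norm measurable_const) measurable_const
    (Measurable.ite (measurableSet_lt measurable_norm measurable_const) ?_ ?_)
  · exact (measurable_const.div measurable_norm).pow_const s
  · exact measurable_const.div (measurable_norm.pow_const m)

lemma phiK_mem_Icc (hr : r ∈ Ioo 0 1) (hθ : θ ≤ 1) (hs : 0 ≤ s) (hsm : s ≤ m)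
    (x : Euc n) : phiK n m s θ r x ∈ Icc 0 1 := by
  obtain ⟨hr0, hr1⟩ := hr
  have hrθ : 0 < r ^ θ := Real.rpow_pos_of_pos hr0 θ
  unfold phiK
  split_ifs with h₁ h₂
  · simp
  · have hx : r ≤ ‖x‖ := not_lt.1 h₁
    exact ⟨by positivity,
      Real.rpow_le_one (by positivity) (div_le_one_of_le₀ hx (norm_nonneg x)) hs⟩
  · have hx : r ^ θ ≤ ‖x‖ := not_lt.1 h₂
    have hx0 : 0 < ‖x‖ := hrθ.trans_le hx
    refine ⟨by positivity, (div_le_one (by positivity)).2 ?_⟩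
    calc r ^ (θ * (m - s) + s) ≤ r ^ (θ * m) :=
          Real.rpow_le_rpow_of_exponent_ge hr0 hr1.le (by nlinarith)
      _ = (r ^ θ) ^ m := Real.rpow_mul hr0.le θ m
      _ ≤ ‖x‖ ^ m := Real.rpow_le_rpow hrθ.le hx (hs.trans hsm)

lemma phiK_le_phiK_of_le (hr : r ∈ Ioo 0 1) (hθ : θ ≤ 1) (hts : t ≤ s)
    (x : Euc n) : phiK n m s θ r x ≤ phiK n m t θ r x := by
  obtain ⟨hr0, hr1⟩ := hr
  unfold phiK
  split_ifs with h₁ h₂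
  · exact le_rfl
  · have hx : 0 < ‖x‖ := hr0.trans_le (not_lt.1 h₁)
    exact Real.rpow_le_rpow_of_exponent_ge (by positivity)
      (div_le_one_of_le₀ (not_lt.1 h₁) hx.le) hts
  · have hx : 0 < ‖x‖ := (Real.rpow_pos_of_pos hr0 θ).trans_le (not_lt.1 h₂)
    exact div_le_div_of_nonneg_right
      (Real.rpow_le_rpow_of_exponent_ge hr0 hr1.le (by nlinarith)) (by positivity)

/-- On `r ≤ ‖x‖ < r ^ θ` the ratio of the two kernels is `(r / ‖x‖) ^ (s - t)`, which is at least
`r ^ ((1 - θ) * (s - t))`; beyond `r ^ θ` it is exactly that power. -/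
lemma rpow_mul_phiK_le_phiK (hr : r ∈ Ioo 0 1) (hθ : θ ≤ 1) (hts : t ≤ s) (x : Euc n) :
    r ^ ((1 - θ) * (s - t)) * phiK n m t θ r x ≤ phiK n m s θ r x := by
  obtain ⟨hr0, hr1⟩ := hr
  unfold phiK
  split_ifs with h₁ h₂
  · rw [mul_one]; exact Real.rpow_le_one hr0.le hr1.le (by nlinarith)
  · have hx : 0 < ‖x‖ := hr0.trans_le (not_lt.1 h₁)
    have hrx : r ^ (1 - θ) ≤ r / ‖x‖ := by
      rw [Real.rpow_sub hr0, Real.rpow_one]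
      exact div_le_div_of_nonneg_left hr0.le hx h₂.le
    calc r ^ ((1 - θ) * (s - t)) * (r / ‖x‖) ^ t
        ≤ (r / ‖x‖) ^ (s - t) * (r / ‖x‖) ^ t := by
          rw [Real.rpow_mul hr0.le]
          gcongr
      _ = (r / ‖x‖) ^ s := by rw [← Real.rpow_add (by positivity)]; ring_nf
  · rw [mul_div_assoc', ← Real.rpow_add hr0]
    exact le_of_eq (by ring_nf)

lemma div_rpow_le_phiK_of_norm_le {R : ℝ} (hr : 0 < r) (hrR : r ≤ R) (hm : 0 ≤ m) (x : Euc n)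
    (hx : ‖x‖ ≤ R) : (r / R) ^ m ≤ phiK n m m θ r x := by
  have hR : 0 < R := hr.trans_le hrR
  unfold phiK
  split_ifs with h₁ h₂
  · exact Real.rpow_le_one (by positivity) (div_le_one_of_le₀ hrR hR.le) hm
  · have hx0 : 0 < ‖x‖ := hr.trans_le (not_lt.1 h₁)
    gcongr
  · have hx0 : 0 < ‖x‖ := hr.trans_le ((not_lt.1 h₁))
    rw [sub_self, mul_zero, zero_add, ← Real.div_rpow hr.le hx0.le]
    gcongr

end Kernel

lemma le_integral_of_forall_mem_le {α : Type*} [MeasurableSpace α] {μ : Measure α}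
    [IsProbabilityMeasure μ] {E : Set α} (hμE : μ Eᶜ = 0) {f : α → ℝ} (hf : Integrable f μ)
    {c : ℝ} (hc : ∀ x ∈ E, c ≤ f x) : c ≤ ∫ x, f x ∂μ := by
  have hae : ∀ᵐ x ∂μ, c ≤ f x :=
    (measure_eq_zero_iff_ae_notMem.1 hμE).mono fun x hx => hc x (by simpa using hx)
  simpa using integral_mono_ae (integrable_const c) hf hae

section Energy

variable {n : ℕ} {φ ψ : Euc n → ℝ} {μ : Measure (Euc n)}

lemma integrable_comp_sub [IsFiniteMeasure μ] (hφ : Measurable φ)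
    (hφ01 : ∀ x, φ x ∈ Icc 0 1) (x : Euc n) : Integrable (fun y => φ (x - y)) μ :=
  (integrable_const 1).mono' (hφ.comp (measurable_const.sub measurable_id)).aestronglyMeasurable
    (Eventually.of_forall fun y => abs_le.2 ⟨by linarith [(hφ01 (x - y)).1], (hφ01 (x - y)).2⟩)

lemma potential_mem_Icc [IsProbabilityMeasure μ] (hφ : Measurable φ)
    (hφ01 : ∀ x, φ x ∈ Icc 0 1) (x : Euc n) : potential n φ μ x ∈ Icc 0 1 := by
  refine ⟨integral_nonneg fun y => (hφ01 (x - y)).1, ?_⟩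
  simpa [potential] using
    integral_mono (integrable_comp_sub (μ := μ) hφ hφ01 x) (integrable_const 1)
    fun y => (hφ01 (x - y)).2

lemma integrable_potential [IsProbabilityMeasure μ] (hφ : Measurable φ)
    (hφ01 : ∀ x, φ x ∈ Icc 0 1) : Integrable (potential n φ μ) μ :=
  (integrable_const 1).mono'
    ((hφ.comp (measurable_fst.sub measurable_snd)).stronglyMeasurable.integral_prod_right'
      |>.aestronglyMeasurable)
    (Eventually.of_forall fun x => abs_le.2
      ⟨by linarith [(potential_mem_Icc hφ hφ01 x (μ := μ)).1], (potential_mem_Icc hφ hφ01 x).2⟩)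

lemma energy_nonneg (hφ0 : ∀ x, 0 ≤ φ x) : 0 ≤ energy n φ μ :=
  integral_nonneg fun _ => integral_nonneg fun _ => hφ0 _

lemma energy_le_one [IsProbabilityMeasure μ] (hφ : Measurable φ) (hφ01 : ∀ x, φ x ∈ Icc 0 1) :
    energy n φ μ ≤ 1 := by
  simpa [energy, potential] using
    integral_mono (integrable_potential (μ := μ) hφ hφ01) (integrable_const 1)
    fun x => (potential_mem_Icc hφ hφ01 x).2

lemma energy_mono [IsProbabilityMeasure μ] (hφ0 : ∀ x, 0 ≤ φ x) (hψ : Measurable ψ)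
    (hψ01 : ∀ x, ψ x ∈ Icc 0 1) (hφψ : ∀ x, φ x ≤ ψ x) : energy n φ μ ≤ energy n ψ μ :=
  integral_mono_of_nonneg (Eventually.of_forall fun _ => integral_nonneg fun _ => hφ0 _)
    (integrable_potential hψ hψ01) (Eventually.of_forall fun x =>
      integral_mono_of_nonneg (Eventually.of_forall fun _ => hφ0 _)
        (integrable_comp_sub hψ hψ01 x) (Eventually.of_forall fun _ => hφψ _))

lemma energy_const_mul (c : ℝ) : energy n (fun x => c * φ x) μ = c * energy n φ μ := by
  simp only [energy, integral_const_mul]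

lemma le_energy {E : Set (Euc n)} (hE : Bornology.IsBounded E) [IsProbabilityMeasure μ]
    (hμE : μ Eᶜ = 0) (hφ : Measurable φ) (hφ01 : ∀ x, φ x ∈ Icc 0 1) {c : ℝ}
    (hc : ∀ x, ‖x‖ ≤ diam E → c ≤ φ x) : c ≤ energy n φ μ := by
  refine le_integral_of_forall_mem_le hμE (integrable_potential hφ hφ01) fun x hx => ?_
  refine le_integral_of_forall_mem_le hμE (integrable_comp_sub hφ hφ01 x) fun y hy => ?_
  exact hc _ (dist_eq_norm x y ▸ dist_le_diam_of_mem hE hx hy)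

end Energy

def infEnergy (n : ℕ) (φ : Euc n → ℝ) (E : Set (Euc n)) : ℝ :=
  sInf {e : ℝ | ∃ μ : Measure (Euc n), PMeasOn n E μ ∧ e = energy n φ μ}

section InfEnergy

variable {n : ℕ} {φ ψ : Euc n → ℝ} {E : Set (Euc n)}

lemma exists_pMeasOn (hne : E.Nonempty) : ∃ μ, PMeasOn n E μ := by
  obtain ⟨x, hx⟩ := hne
  exact ⟨Measure.dirac x, inferInstance, by simp [Measure.dirac_apply, hx]⟩

lemma energies_nonempty (hne : E.Nonempty) :
    {e : ℝ | ∃ μ : Measure (Euc n), PMeasOn n E μ ∧ e = energy n φ μ}.Nonempty :=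
  let ⟨μ, hμ⟩ := exists_pMeasOn hne
  ⟨_, μ, hμ, rfl⟩

lemma energies_bddBelow (hφ0 : ∀ x, 0 ≤ φ x) :
    BddBelow {e : ℝ | ∃ μ : Measure (Euc n), PMeasOn n E μ ∧ e = energy n φ μ} :=
  ⟨0, by rintro _ ⟨μ, -, rfl⟩; exact energy_nonneg hφ0⟩

lemma infEnergy_le_one (hne : E.Nonempty) (hφ : Measurable φ) (hφ01 : ∀ x, φ x ∈ Icc 0 1) :
    infEnergy n φ E ≤ 1 := by
  obtain ⟨μ, hμ⟩ := exists_pMeasOn hne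
  have := hμ.1
  exact csInf_le_of_le (energies_bddBelow fun x => (hφ01 x).1) ⟨μ, hμ, rfl⟩
    (energy_le_one hφ hφ01)

lemma le_infEnergy (hE : Bornology.IsBounded E) (hne : E.Nonempty) (hφ : Measurable φ)
    (hφ01 : ∀ x, φ x ∈ Icc 0 1) {c : ℝ} (hc : ∀ x, ‖x‖ ≤ diam E → c ≤ φ x) :
    c ≤ infEnergy n φ E := by
  refine le_csInf (energies_nonempty hne) ?_
  rintro _ ⟨μ, ⟨hμ, hμE⟩, rfl⟩
  exact le_energy hE hμE hφ hφ01 hc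

lemma mul_infEnergy_le (hne : E.Nonempty) {c : ℝ} (hc : 0 ≤ c) (hφ0 : ∀ x, 0 ≤ φ x)
    (hψ : Measurable ψ) (hψ01 : ∀ x, ψ x ∈ Icc 0 1) (hφψ : ∀ x, c * φ x ≤ ψ x) :
    c * infEnergy n φ E ≤ infEnergy n ψ E := by
  refine le_csInf (energies_nonempty hne) ?_
  rintro _ ⟨μ, hμ, rfl⟩
  have := hμ.1
  calc c * infEnergy n φ E ≤ c * energy n φ μ :=
        mul_le_mul_of_nonneg_left (csInf_le (energies_bddBelow hφ0) ⟨μ, hμ, rfl⟩) hc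
    _ = energy n (fun x => c * φ x) μ := (energy_const_mul c).symm
    _ ≤ energy n ψ μ := energy_mono (fun x => mul_nonneg hc (hφ0 x)) hψ hψ01 hφψ

end InfEnergy

section Capacity

variable {n : ℕ} {m s t θ r : ℝ} {E : Set (Euc n)}

lemma capacity_eq_inv_infEnergy : capacity n m s θ r E = (infEnergy n (phiK n m s θ r) E)⁻¹ :=
  rfl

lemma div_rpow_le_infEnergy_phiK (hr : r ∈ Ioo 0 1) (hθ : θ ≤ 1) (hE : Bornology.IsBounded E)
    (hne : E.Nonempty) (hs : 0 ≤ s) (hsm : s ≤ m) :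
    (r / max (diam E) 1) ^ m ≤ infEnergy n (phiK n m s θ r) E :=
  le_infEnergy hE hne measurable_phiK (phiK_mem_Icc hr hθ hs hsm) fun x hx =>
    (div_rpow_le_phiK_of_norm_le hr.1 (hr.2.le.trans (le_max_right _ _)) (hs.trans hsm) x
      (hx.trans (le_max_left _ _))).trans (phiK_le_phiK_of_le hr hθ hsm x)

lemma infEnergy_phiK_pos (hr : r ∈ Ioo 0 1) (hθ : θ ≤ 1) (hE : Bornology.IsBounded E)
    (hne : E.Nonempty) (hs : 0 ≤ s) (hsm : s ≤ m) : 0 < infEnergy n (phiK n m s θ r) E :=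
  (Real.rpow_pos_of_pos (div_pos hr.1 (one_pos.trans_le (le_max_right _ _))) m).trans_le
    (div_rpow_le_infEnergy_phiK hr hθ hE hne hs hsm)

lemma one_le_capacity (hr : r ∈ Ioo 0 1) (hθ : θ ≤ 1) (hE : Bornology.IsBounded E)
    (hne : E.Nonempty) (hs : 0 ≤ s) (hsm : s ≤ m) : 1 ≤ capacity n m s θ r E :=
  one_le_inv₀ (infEnergy_phiK_pos hr hθ hE hne hs hsm) |>.2
    (infEnergy_le_one hne measurable_phiK (phiK_mem_Icc hr hθ hs hsm))

lemma capacity_le_rpow_div_rpow (hr : r ∈ Ioo 0 1) (hθ : θ ≤ 1) (hE : Bornology.IsBounded E)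
    (hne : E.Nonempty) (hs : 0 ≤ s) (hsm : s ≤ m) :
    capacity n m s θ r E ≤ max (diam E) 1 ^ m / r ^ m := by
  have hR : 0 < max (diam E) 1 := one_pos.trans_le (le_max_right _ _)
  rw [capacity_eq_inv_infEnergy, ← inv_div, ← Real.div_rpow hr.1.le hR.le]
  exact inv_anti₀ (by have := hr.1; positivity) (div_rpow_le_infEnergy_phiK hr hθ hE hne hs hsm)

lemma capacity_mono (hr : r ∈ Ioo 0 1) (hθ : θ ≤ 1) (hE : Bornology.IsBounded E)
    (hne : E.Nonempty) (ht : 0 ≤ t) (hts : t ≤ s) (hsm : s ≤ m) :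
    capacity n m t θ r E ≤ capacity n m s θ r E := by
  rw [capacity_eq_inv_infEnergy, capacity_eq_inv_infEnergy]
  refine inv_anti₀ (infEnergy_phiK_pos hr hθ hE hne (ht.trans hts) hsm) ?_
  simpa using mul_infEnergy_le hne zero_le_one
    (fun x => (phiK_mem_Icc hr hθ (ht.trans hts) hsm x).1)
    measurable_phiK (phiK_mem_Icc hr hθ ht (hts.trans hsm))
    (fun x => (one_mul _).trans_le (phiK_le_phiK_of_le hr hθ hts x))

lemma capacity_le_capacity_div_rpow (hr : r ∈ Ioo 0 1) (hθ : θ ≤ 1)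
    (hE : Bornology.IsBounded E) (hne : E.Nonempty) (ht : 0 ≤ t) (hts : t ≤ s) (hsm : s ≤ m) :
    capacity n m s θ r E ≤ capacity n m t θ r E / r ^ ((1 - θ) * (s - t)) := by
  have hk : 0 < r ^ ((1 - θ) * (s - t)) := Real.rpow_pos_of_pos hr.1 _
  rw [capacity_eq_inv_infEnergy, capacity_eq_inv_infEnergy, div_eq_inv_mul, ← mul_inv]
  exact inv_anti₀ (mul_pos hk (infEnergy_phiK_pos hr hθ hE hne ht (hts.trans hsm)))
    (mul_infEnergy_le hne hk.le (fun x => (phiK_mem_Icc hr hθ ht (hts.trans hsm) x).1)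
      measurable_phiK (phiK_mem_Icc hr hθ (ht.trans hts) hsm) (rpow_mul_phiK_le_phiK hr hθ hts))

end Capacity

lemma log_div_neg_log_le_add {a b r k : ℝ} (ha : 0 < a) (hr : r ∈ Ioo 0 1) (hab : a ≤ b / r ^ k) :
    Real.log a / (-Real.log r) ≤ Real.log b / (-Real.log r) + k := by
  have hrk : 0 < r ^ k := Real.rpow_pos_of_pos hr.1 k
  have hb : 0 < b := (div_pos_iff_of_pos_right hrk).1 (ha.trans_le hab)
  have hlog : 0 < -Real.log r := neg_pos.2 (Real.log_neg hr.1 hr.2)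
  have hab' : Real.log a ≤ Real.log b - k * Real.log r := by
    rw [← Real.log_rpow hr.1, ← Real.log_div hb.ne' hrk.ne']
    exact Real.log_le_log ha hab
  rw [div_add' _ _ _ hlog.ne', div_le_div_iff_of_pos_right hlog]
  linarith

lemma tendsto_div_neg_log_add (a b : ℝ) :
    Tendsto (fun r => a / (-Real.log r) + b) (𝓝[>] 0) (𝓝 b) := by
  simpa using ((tendsto_const_nhds (x := a)).div_atTop
    (tendsto_neg_atBot_atTop.comp Real.tendsto_log_nhdsGT_zero)).add_const b

section Cquot

variable {n : ℕ} {m s t θ r : ℝ} {E : Set (Euc n)}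

lemma cquot_nonneg (hr : r ∈ Ioo 0 1) (hθ : θ ≤ 1) (hE : Bornology.IsBounded E)
    (hne : E.Nonempty) (hs : 0 ≤ s) (hsm : s ≤ m) : 0 ≤ Cquot n m s θ E r :=
  div_nonneg (Real.log_nonneg (one_le_capacity hr hθ hE hne hs hsm))
    (neg_nonneg.2 (Real.log_nonpos hr.1.le hr.2.le))

lemma cquot_mono (hr : r ∈ Ioo 0 1) (hθ : θ ≤ 1) (hE : Bornology.IsBounded E)
    (hne : E.Nonempty) (ht : 0 ≤ t) (hts : t ≤ s) (hsm : s ≤ m) :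
    Cquot n m t θ E r ≤ Cquot n m s θ E r :=
  div_le_div_of_nonneg_right
    (Real.log_le_log (one_pos.trans_le (one_le_capacity hr hθ hE hne ht (hts.trans hsm)))
      (capacity_mono hr hθ hE hne ht hts hsm))
    (neg_nonneg.2 (Real.log_nonpos hr.1.le hr.2.le))

lemma cquot_le_add (hr : r ∈ Ioo 0 1) (hθ : θ ≤ 1) (hE : Bornology.IsBounded E)
    (hne : E.Nonempty) (ht : 0 ≤ t) (hts : t ≤ s) (hsm : s ≤ m) :
    Cquot n m s θ E r ≤ Cquot n m t θ E r + (1 - θ) * (s - t) :=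
  log_div_neg_log_le_add (one_pos.trans_le (one_le_capacity hr hθ hE hne (ht.trans hts) hsm)) hr
    (capacity_le_capacity_div_rpow hr hθ hE hne ht hts hsm)

lemma cquot_le_log_div_neg_log_add (hr : r ∈ Ioo 0 1) (hθ : θ ≤ 1) (hE : Bornology.IsBounded E)
    (hne : E.Nonempty) (hs : 0 ≤ s) (hsm : s ≤ m) :
    Cquot n m s θ E r ≤ Real.log (max (diam E) 1 ^ m) / (-Real.log r) + m :=
  log_div_neg_log_le_add (one_pos.trans_le (one_le_capacity hr hθ hE hne hs hsm)) hr
    (capacity_le_rpow_div_rpow hr hθ hE hne hs hsm)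

end Cquot

theorem statement4_general (n m : ℕ)
    (E : Set (Euc n)) (hE : IsCompact E) (hEne : E.Nonempty)
    (θ : ℝ) (hθ : θ ∈ Ioc (0:ℝ) 1) :
    (∀ r : ℝ, r ∈ Ioo (0:ℝ) 1 → ∀ s t : ℝ, 0 ≤ t → t ≤ s → s ≤ m →
      -(s - t) ≤ (Cquot n m s θ E r - s) - (Cquot n m t θ E r - t) ∧
        (Cquot n m s θ E r - s) - (Cquot n m t θ E r - t) ≤ -(θ * (s - t))) ∧
    (∃! s : ℝ, s ∈ Icc (0:ℝ) m ∧ liminf (fun r => Cquot n m s θ E r) (𝓝[>] 0) = s) ∧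
    (∃! s : ℝ, s ∈ Icc (0:ℝ) m ∧ limsup (fun r => Cquot n m s θ E r) (𝓝[>] 0) = s) := by
  obtain ⟨hθ0, hθ1⟩ := hθ
  have hbounds : ∀ r ∈ Ioo (0:ℝ) 1, ∀ t s : ℝ, 0 ≤ t → t ≤ s → s ≤ m →
      Cquot n m t θ E r ≤ Cquot n m s θ E r ∧
        Cquot n m s θ E r ≤ Cquot n m t θ E r + (1 - θ) * (s - t) :=
    fun r hr t s ht hts hsm => ⟨cquot_mono hr hθ1 hE.isBounded hEne ht hts hsm,
      cquot_le_add hr hθ1 hE.isBounded hEne ht hts hsm⟩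
  have hr : ∀ᶠ r in 𝓝[>] (0:ℝ), r ∈ Ioo (0:ℝ) 1 := Ioo_mem_nhdsGT one_pos
  have hF t s ht hts hsm := hr.mono fun r hr => hbounds r hr t s ht hts hsm
  have hF0 := hr.mono fun r hr => cquot_nonneg hr hθ1 hE.isBounded hEne le_rfl (Nat.cast_nonneg m)
  have hFm := hr.mono fun r hr =>
    cquot_le_log_div_neg_log_add hr hθ1 hE.isBounded hEne (Nat.cast_nonneg m) le_rfl
  have hc : 1 - θ < 1 := by linarith
  refine ⟨fun r hr s t ht hts hsm => ?_,
    existsUnique_liminf_eq_self (Nat.cast_nonneg m) hc hF hF0 hFm (tendsto_div_neg_log_add _ _),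
    existsUnique_limsup_eq_self (Nat.cast_nonneg m) hc hF hF0 hFm (tendsto_div_neg_log_add _ _)⟩
  obtain ⟨h₁, h₂⟩ := hbounds r hr t s ht hts hsm
  constructor <;> linarith

/-- Lipschitz-type bounds in `s` for `log C_{r,θ}^{s,m}(E)/(-log r) - s`, and
uniqueness of the fixed points `s` of the lower/upper limits of `log C_{r,θ}^{s,m}(E)/(-log r)`. -/
theorem statement4 (n m : ℕ) (hm1 : 1 ≤ m) (hmn : m ≤ n)
    (E : Set (Euc n)) (hE : IsCompact E) (hEne : E.Nonempty)
    (θ : ℝ) (hθ : θ ∈ Ioc (0:ℝ) 1) :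
    (∀ r : ℝ, r ∈ Ioo (0:ℝ) 1 → ∀ s t : ℝ, 0 ≤ t → t ≤ s → s ≤ m →
      -(s - t) ≤ (Cquot n m s θ E r - s) - (Cquot n m t θ E r - t) ∧
        (Cquot n m s θ E r - s) - (Cquot n m t θ E r - t) ≤ -(θ * (s - t))) ∧
    (∃! s : ℝ, s ∈ Icc (0:ℝ) m ∧ liminf (fun r => Cquot n m s θ E r) (𝓝[>] 0) = s) ∧
    (∃! s : ℝ, s ∈ Icc (0:ℝ) m ∧ limsup (fun r => Cquot n m s θ E r) (𝓝[>] 0) = s) :=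
  statement4_general n m E hE hEne θ hθ
end
end
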